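/- arXiv:1811.06684 — 7 statements merged into one kernel-verified Lean document; each statement's English description precedes it below -/
import Mathlib

section
/- Consider the economy with two goods (3 units each), individuals I = {h, w, s, s'} in families {h,w}, {s}, {s'}, where u_h = u_s has Cobb-Douglas coefficient 1/3 and u_w = u_{s'} has coefficient 2/3. This economy has an individual-NE Pareto-optimal allocation, but no individual-NE Pareto optimum can be a market equilibrium from equal endowments: in any equilibrium from equal endowments with strictly convex preferences, the family's bundle differs from at least one single's bundle, and since that single's bundle is the unique optimum in the common budget set, the family member sharing that single's utility envies him. -/
noncomputable def cd (a : ℝ) (x : Fin 2 → ℝ) : ℝ := x 0 ^ a * x 1 ^ (1 - a)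

lemma cd_nn (a : ℝ) {y : Fin 2 → ℝ} (h0 : 0 ≤ y 0) (h1 : 0 ≤ y 1) : 0 ≤ cd a y :=
  mul_nonneg (Real.rpow_nonneg h0 _) (Real.rpow_nonneg h1 _)

lemma cd13_cube {y : Fin 2 → ℝ} (h0 : 0 ≤ y 0) (h1 : 0 ≤ y 1) :
    (cd (1/3) y) ^ (3:ℕ) = y 0 * y 1 ^ 2 := by
  unfold cd
  rw [mul_pow, ← Real.rpow_natCast (y 0 ^ ((1:ℝ)/3)), ← Real.rpow_natCast (y 1 ^ (1 - (1:ℝ)/3)),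
    ← Real.rpow_mul h0, ← Real.rpow_mul h1]
  norm_num

lemma cd23_cube {y : Fin 2 → ℝ} (h0 : 0 ≤ y 0) (h1 : 0 ≤ y 1) :
    (cd (2/3) y) ^ (3:ℕ) = y 0 ^ 2 * y 1 := by
  unfold cd
  rw [mul_pow, ← Real.rpow_natCast (y 0 ^ ((2:ℝ)/3)), ← Real.rpow_natCast (y 1 ^ (1 - (2:ℝ)/3)),
    ← Real.rpow_mul h0, ← Real.rpow_mul h1]
  norm_num

lemma cd13_le {y z : Fin 2 → ℝ} (hy0 : 0 ≤ y 0) (hy1 : 0 ≤ y 1) (hz0 : 0 ≤ z 0) (hz1 : 0 ≤ z 1) :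
    cd (1/3) y ≤ cd (1/3) z ↔ y 0 * y 1 ^ 2 ≤ z 0 * z 1 ^ 2 := by
  rw [← cd13_cube hy0 hy1, ← cd13_cube hz0 hz1]
  exact (pow_le_pow_iff_left₀ (cd_nn _ hy0 hy1) (cd_nn _ hz0 hz1) three_ne_zero).symm

lemma cd13_lt {y z : Fin 2 → ℝ} (hy0 : 0 ≤ y 0) (hy1 : 0 ≤ y 1) (hz0 : 0 ≤ z 0) (hz1 : 0 ≤ z 1) :
    cd (1/3) y < cd (1/3) z ↔ y 0 * y 1 ^ 2 < z 0 * z 1 ^ 2 := by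
  rw [← cd13_cube hy0 hy1, ← cd13_cube hz0 hz1]
  exact (pow_lt_pow_iff_left₀ (cd_nn _ hy0 hy1) (cd_nn _ hz0 hz1) three_ne_zero).symm

lemma cd23_le {y z : Fin 2 → ℝ} (hy0 : 0 ≤ y 0) (hy1 : 0 ≤ y 1) (hz0 : 0 ≤ z 0) (hz1 : 0 ≤ z 1) :
    cd (2/3) y ≤ cd (2/3) z ↔ y 0 ^ 2 * y 1 ≤ z 0 ^ 2 * z 1 := by
  rw [← cd23_cube hy0 hy1, ← cd23_cube hz0 hz1]
  exact (pow_le_pow_iff_left₀ (cd_nn _ hy0 hy1) (cd_nn _ hz0 hz1) three_ne_zero).symm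

lemma cd23_lt {y z : Fin 2 → ℝ} (hy0 : 0 ≤ y 0) (hy1 : 0 ≤ y 1) (hz0 : 0 ≤ z 0) (hz1 : 0 ≤ z 1) :
    cd (2/3) y < cd (2/3) z ↔ y 0 ^ 2 * y 1 < z 0 ^ 2 * z 1 := by
  rw [← cd23_cube hy0 hy1, ← cd23_cube hz0 hz1]
  exact (pow_lt_pow_iff_left₀ (cd_nn _ hy0 hy1) (cd_nn _ hz0 hz1) three_ne_zero).symm

lemma L1 {p q c : ℝ} (hp : 0 ≤ p) (hq : 0 ≤ q) (hc : 0 ≤ c)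
    (h1 : c^3 ≤ p * q^2) (h2 : c^3 ≤ p^2 * q) : 2*c ≤ p + q := by
  have key : (2*c)^3 ≤ (p+q)^3 := by
    nlinarith [mul_nonneg (sq_nonneg (p - q)) (add_nonneg hp hq)]
  exact (pow_le_pow_iff_left₀ (by linarith) (by linarith) three_ne_zero).mp key

lemma L1s {p q c : ℝ} (hp : 0 ≤ p) (hq : 0 ≤ q) (hc : 0 ≤ c)
    (h1 : c^3 < p * q^2) (h2 : c^3 ≤ p^2 * q) : 2*c < p + q := by
  have key : (2*c)^3 < (p+q)^3 := by
    nlinarith [mul_nonneg (sq_nonneg (p - q)) (add_nonneg hp hq)]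
  exact (pow_lt_pow_iff_left₀ (by linarith) (by linarith) three_ne_zero).mp key

lemma L1s' {p q c : ℝ} (hp : 0 ≤ p) (hq : 0 ≤ q) (hc : 0 ≤ c)
    (h1 : c^3 ≤ p * q^2) (h2 : c^3 < p^2 * q) : 2*c < p + q := by
  have key : (2*c)^3 < (p+q)^3 := by
    nlinarith [mul_nonneg (sq_nonneg (p - q)) (add_nonneg hp hq)]
  exact (pow_lt_pow_iff_left₀ (by linarith) (by linarith) three_ne_zero).mp key

lemma L2 {p q a : ℝ} (hp : 0 ≤ p) (hq : 0 ≤ q) (ha : 0 ≤ a)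
    (h1 : 4*a^3 ≤ p * q^2) : 3*a ≤ p + q := by
  have key : (3*a)^3 ≤ (p+q)^3 := by
    nlinarith [mul_nonneg (sq_nonneg (2*p - q)) (by linarith : (0:ℝ) ≤ p + 4*q)]
  exact (pow_le_pow_iff_left₀ (by linarith) (by linarith) three_ne_zero).mp key

lemma L2s {p q a : ℝ} (hp : 0 ≤ p) (hq : 0 ≤ q) (ha : 0 ≤ a)
    (h1 : 4*a^3 < p * q^2) : 3*a < p + q := by
  have key : (3*a)^3 < (p+q)^3 := by
    nlinarith [mul_nonneg (sq_nonneg (2*p - q)) (by linarith : (0:ℝ) ≤ p + 4*q)]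
  exact (pow_lt_pow_iff_left₀ (by linarith) (by linarith) three_ne_zero).mp key

lemma L2' {p q a : ℝ} (hp : 0 ≤ p) (hq : 0 ≤ q) (ha : 0 ≤ a)
    (h1 : 4*a^3 ≤ p^2 * q) : 3*a ≤ p + q := by
  have key : (3*a)^3 ≤ (p+q)^3 := by
    nlinarith [mul_nonneg (sq_nonneg (p - 2*q)) (by linarith : (0:ℝ) ≤ 4*p + q)]
  exact (pow_le_pow_iff_left₀ (by linarith) (by linarith) three_ne_zero).mp key

lemma L2s' {p q a : ℝ} (hp : 0 ≤ p) (hq : 0 ≤ q) (ha : 0 ≤ a)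
    (h1 : 4*a^3 < p^2 * q) : 3*a < p + q := by
  have key : (3*a)^3 < (p+q)^3 := by
    nlinarith [mul_nonneg (sq_nonneg (p - 2*q)) (by linarith : (0:ℝ) ≤ 4*p + q)]
  exact (pow_lt_pow_iff_left₀ (by linarith) (by linarith) three_ne_zero).mp key

lemma U12 {u v w : ℝ} (hu : 0 ≤ u) (hv : 0 ≤ v) (h : u + v ≤ w) : 27*(u*v^2) ≤ 4*w^3 := by
  nlinarith [mul_nonneg (sq_nonneg (2*u - v)) (by linarith : (0:ℝ) ≤ u + 4*v),
    pow_le_pow_left₀ (by linarith : (0:ℝ) ≤ u + v) h 3]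

lemma U21 {u v w : ℝ} (hu : 0 ≤ u) (hv : 0 ≤ v) (h : u + v ≤ w) : 27*(u^2*v) ≤ 4*w^3 := by
  nlinarith [mul_nonneg (sq_nonneg (u - 2*v)) (by linarith : (0:ℝ) ≤ 4*u + v),
    pow_le_pow_left₀ (by linarith : (0:ℝ) ≤ u + v) h 3]

lemma Eq12 {u v w : ℝ} (hu : 0 ≤ u) (hv : 0 ≤ v) (h : u + v ≤ w) (hw : 0 < w)
    (he : 27*(u*v^2) = 4*w^3) : u = w/3 ∧ v = 2*w/3 := by
  have hs : u + v = w := by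
    by_contra hne
    have hlt : u + v < w := lt_of_le_of_ne h hne
    have : 27*(u*v^2) < 4*w^3 := by
      nlinarith [mul_nonneg (sq_nonneg (2*u - v)) (by linarith : (0:ℝ) ≤ u + 4*v),
        pow_lt_pow_left₀ hlt (by linarith : (0:ℝ) ≤ u + v) three_ne_zero]
    linarith
  have hz : (2*u - v)^2 * (u + 4*v) = 0 := by
    have hid : (2*u-v)^2*(u+4*v) = 4*(u+v)^3 - 27*(u*v^2) := by ring
    rw [hid, hs]; linarith
  have h4 : 0 < u + 4*v := by
    rcases lt_or_eq_of_le (by linarith : (0:ℝ) ≤ u + 4*v) with h' | h'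
    · exact h'
    · exfalso; nlinarith
  have : (2*u - v)^2 = 0 := by
    rcases mul_eq_zero.mp hz with h' | h'
    · exact h'
    · linarith
  have : 2*u = v := by nlinarith [sq_nonneg (2*u - v)]
  constructor <;> linarith

lemma Eq21 {u v w : ℝ} (hu : 0 ≤ u) (hv : 0 ≤ v) (h : u + v ≤ w) (hw : 0 < w)
    (he : 27*(u^2*v) = 4*w^3) : u = 2*w/3 ∧ v = w/3 := by
  have := Eq12 hv hu (by linarith) hw (by ring_nf; ring_nf at he; linarith)
  exact ⟨this.2, this.1⟩

set_option maxHeartbeats 2000000 in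
/-- The economy with e = (3,3), families {h,w},{s},{s'} (agents 0=h, 1=w, 2=s,
3=s'), α_h = α_s = 1/3 and α_w = α_{s'} = 2/3, has an individual-NE Pareto
optimum, but no individual-NE Pareto optimum is a market equilibrium from equal
endowments. -/
theorem stmt_8 :
    let e : Fin 2 → ℝ := ![3, 3]
    let ebar : Fin 2 → ℝ := ![1, 1]
    let u : Fin 4 → (Fin 2 → ℝ) → ℝ := fun i => cd (![(1 : ℝ)/3, 2/3, 1/3, 2/3] i)
    let fam : Fin 4 → Fin 3 := ![0, 0, 1, 2]
    let Feasible : (Fin 3 → Fin 2 → ℝ) → Prop := fun x =>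
      (∀ f g, 0 ≤ x f g) ∧ ∀ g, ∑ f, x f g ≤ e g
    let NE : (Fin 3 → Fin 2 → ℝ) → Prop := fun x => ∀ i f', u i (x (fam i)) ≥ u i (x f')
    let PO : (Fin 3 → Fin 2 → ℝ) → Prop := fun x => ¬ ∃ y, Feasible y ∧
      (∀ i, u i (y (fam i)) ≥ u i (x (fam i))) ∧
      ∃ j, u j (y (fam j)) > u j (x (fam j))
    let MEq : (Fin 2 → ℝ) → (Fin 3 → Fin 2 → ℝ) → Prop := fun p x =>
      ∀ f, (∑ g, p g * x f g) ≤ (∑ g, p g * ebar g) ∧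
        ∀ x' : Fin 2 → ℝ, (∀ g, 0 ≤ x' g) →
          ((∀ i, fam i = f → u i x' ≥ u i (x f)) ∧
            ∃ j, fam j = f ∧ u j x' > u j (x f)) →
          (∑ g, p g * ebar g) < ∑ g, p g * x' g
    (∃ x, Feasible x ∧ NE x ∧ PO x) ∧
    ∀ p x, Feasible x → NE x → PO x → ¬ MEq p x := by
  intro e ebar u fam Feasible NE PO MEq
  -- basic constants
  set r : ℝ := (4:ℝ) ^ ((1:ℝ)/3) with hrdef
  have hrpos : 0 < r := Real.rpow_pos_of_pos (by norm_num) _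
  have hr3 : r ^ (3:ℕ) = 4 := by
    rw [hrdef, ← Real.rpow_natCast ((4:ℝ) ^ ((1:ℝ)/3)), ← Real.rpow_mul (by norm_num : (0:ℝ) ≤ 4)]
    norm_num
  have h3r : (0:ℝ) < 3 + r := by linarith
  set a : ℝ := 3 / (3 + r) with hadef
  set c : ℝ := 3 * r / (3 + r) with hcdef
  have ha : 0 < a := by positivity
  have hc : 0 < c := by positivity
  have hca : c = r * a := by rw [hadef, hcdef]; field_simp
  have hsum3 : c + 3 * a = 3 := by rw [hadef, hcdef]; field_simp; ring
  have hc3 : c ^ 3 = 4 * a ^ 3 := by rw [hca, mul_pow, hr3]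
  constructor
  · -- Part 1
    refine ⟨![![c, c], ![a, 2*a], ![2*a, a]], ⟨?_, ?_⟩, ?_, ?_⟩
    · intro f g
      fin_cases f <;> fin_cases g <;> simp <;> linarith
    · intro g
      fin_cases g <;> simp [e, Fin.sum_univ_three] <;> linarith
    · -- NE
      intro i f'
      fin_cases i <;> fin_cases f' <;>
        simp only [u, fam, Matrix.cons_val_zero, Matrix.cons_val_one, Matrix.head_cons,
          Matrix.cons_val_two, Matrix.tail_cons, Matrix.cons_val_three, ge_iff_le, le_refl, Fin.reduceFinMk, Matrix.cons_val] <;>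
        norm_num <;>
      first
      | (rw [cd13_le (by norm_num; linarith) (by norm_num; linarith) (by norm_num; linarith)
            (by norm_num; linarith)] <;> norm_num <;> nlinarith [hc3, ha, hc])
      | (rw [cd23_le (by norm_num; linarith) (by norm_num; linarith) (by norm_num; linarith)
            (by norm_num; linarith)] <;> norm_num <;> nlinarith [hc3, ha, hc])
    · -- PO
      rintro ⟨y, ⟨hy0, hysum⟩, hall, j, hj⟩
      have hyn : ∀ f g, 0 ≤ y f g := hy0
      have hs0 : y 0 0 + y 1 0 + y 2 0 ≤ 3 := by
        have := hysum 0; simpa [e, Fin.sum_univ_three] using this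
      have hs1 : y 0 1 + y 1 1 + y 2 1 ≤ 3 := by
        have := hysum 1; simpa [e, Fin.sum_univ_three] using this
      -- cube forms of the improvement inequalities
      have h0 : c^3 ≤ y 0 0 * y 0 1 ^ 2 := by
        have := hall 0
        simp only [u, fam, Matrix.cons_val_zero, ge_iff_le] at this
        rw [cd13_le (by norm_num; linarith) (by norm_num; linarith) (hyn 0 0) (hyn 0 1)] at this
        norm_num at this
        nlinarith [this]
      have h1 : c^3 ≤ y 0 0 ^ 2 * y 0 1 := by
        have := hall 1
        simp only [u, fam, Matrix.cons_val_zero, Matrix.cons_val_one, Matrix.head_cons,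
          ge_iff_le] at this
        rw [cd23_le (by norm_num; linarith) (by norm_num; linarith) (hyn 0 0) (hyn 0 1)] at this
        norm_num at this
        nlinarith [this]
      have h2 : 4*a^3 ≤ y 1 0 * y 1 1 ^ 2 := by
        have := hall 2
        simp only [u, fam, Matrix.cons_val_zero, Matrix.cons_val_one, Matrix.head_cons,
          Matrix.cons_val_two, Matrix.tail_cons, ge_iff_le] at this
        rw [cd13_le (by norm_num; linarith) (by norm_num; linarith) (hyn 1 0) (hyn 1 1)] at this
        norm_num at this
        nlinarith [this]
      have h3 : 4*a^3 ≤ y 2 0 ^ 2 * y 2 1 := by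
        have := hall 3
        simp only [u, fam, Matrix.cons_val_zero, Matrix.cons_val_one, Matrix.head_cons,
          Matrix.cons_val_two, Matrix.tail_cons, Matrix.cons_val_three, ge_iff_le] at this
        rw [cd23_le (by norm_num; linarith) (by norm_num; linarith) (hyn 2 0) (hyn 2 1)] at this
        norm_num at this
        nlinarith [this]
      have b0 : 2*c ≤ y 0 0 + y 0 1 := L1 (hyn 0 0) (hyn 0 1) hc.le h0 h1
      have b1 : 3*a ≤ y 1 0 + y 1 1 := L2 (hyn 1 0) (hyn 1 1) ha.le h2
      have b2 : 3*a ≤ y 2 0 + y 2 1 := L2' (hyn 2 0) (hyn 2 1) ha.le h3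
      -- strict improvement for agent j
      have : (2*c < y 0 0 + y 0 1) ∨ (3*a < y 1 0 + y 1 1) ∨ (3*a < y 2 0 + y 2 1) := by
        fin_cases j
        · left
          have hcd : cd (1/3) ![c, c] < cd (1/3) (y 0) := hj
          rw [cd13_lt (by norm_num; linarith) (by norm_num; linarith) (hyn 0 0) (hyn 0 1)] at hcd
          norm_num at hcd
          exact L1s (hyn 0 0) (hyn 0 1) hc.le (by nlinarith [hcd]) h1
        · left
          have hcd : cd (2/3) ![c, c] < cd (2/3) (y 0) := hj
          rw [cd23_lt (by norm_num; linarith) (by norm_num; linarith) (hyn 0 0) (hyn 0 1)] at hcd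
          norm_num at hcd
          exact L1s' (hyn 0 0) (hyn 0 1) hc.le h0 (by nlinarith [hcd])
        · right; left
          have hcd : cd (1/3) ![a, 2*a] < cd (1/3) (y 1) := hj
          rw [cd13_lt (by norm_num; linarith) (by norm_num; linarith) (hyn 1 0) (hyn 1 1)] at hcd
          norm_num at hcd
          exact L2s (hyn 1 0) (hyn 1 1) ha.le (by nlinarith [hcd])
        · right; right
          have hcd : cd (2/3) ![2*a, a] < cd (2/3) (y 2) := hj
          rw [cd23_lt (by norm_num; linarith) (by norm_num; linarith) (hyn 2 0) (hyn 2 1)] at hcd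
          norm_num at hcd
          exact L2s' (hyn 2 0) (hyn 2 1) ha.le (by nlinarith [hcd])
      rcases this with h | h | h <;> linarith
  · -- Part 2
    intro p x hFeas hNE hPO hME
    have hxnn : ∀ f g, 0 ≤ x f g := hFeas.1
    have hxb0 : x 0 0 + x 1 0 + x 2 0 ≤ 3 := by
      have := hFeas.2 0; simpa [e, Fin.sum_univ_three] using this
    have hxb1 : x 0 1 + x 1 1 + x 2 1 ≤ 3 := by
      have := hFeas.2 1; simpa [e, Fin.sum_univ_three] using this
    have hW : (∑ g, p g * ebar g) = p 0 + p 1 := by simp [ebar, Fin.sum_univ_two]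
    have hB : ∀ f, p 0 * x f 0 + p 1 * x f 1 ≤ p 0 + p 1 := by
      intro f
      have := (hME f).1
      rw [hW, Fin.sum_univ_two] at this
      exact this
    -- single s (agent 2, family 1) clause
    have hs : ∀ x' : Fin 2 → ℝ, (∀ g, 0 ≤ x' g) → cd (1/3) (x 1) < cd (1/3) x' →
        p 0 + p 1 < p 0 * x' 0 + p 1 * x' 1 := by
      intro x' hx' hgt
      have := (hME 1).2 x' hx' ⟨?_, 2, by rfl, by norm_num [u]; exact hgt⟩
      · rw [hW, Fin.sum_univ_two] at this; exact this
      · intro i hi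
        fin_cases i <;> simp [fam] at hi ⊢ <;> norm_num [u]
        exact hgt.le
    have hs' : ∀ x' : Fin 2 → ℝ, (∀ g, 0 ≤ x' g) → cd (2/3) (x 2) < cd (2/3) x' →
        p 0 + p 1 < p 0 * x' 0 + p 1 * x' 1 := by
      intro x' hx' hgt
      have := (hME 2).2 x' hx' ⟨?_, 3, by rfl, by norm_num [u]; exact hgt⟩
      · rw [hW, Fin.sum_univ_two] at this; exact this
      · intro i hi
        fin_cases i <;> simp [fam] at hi ⊢ <;> norm_num [u]
        exact hgt.le
    -- price positivity
    have hx1cube : x 1 0 * x 1 1 ^ 2 ≤ 27 := by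
      nlinarith [hxnn 0 0, hxnn 1 0, hxnn 2 0, hxnn 0 1, hxnn 1 1, hxnn 2 1]
    have hp0 : 0 < p 0 := by
      have h28 : cd (1/3) (x 1) < cd (1/3) ![28, 1] := by
        rw [cd13_lt (hxnn 1 0) (hxnn 1 1) (by norm_num) (by norm_num)]
        norm_num; linarith
      have := hs ![28, 1] (by intro g; fin_cases g <;> norm_num) h28
      norm_num at this; linarith
    have hp1 : 0 < p 1 := by
      have h6 : cd (1/3) (x 1) < cd (1/3) ![1, 6] := by
        rw [cd13_lt (hxnn 1 0) (hxnn 1 1) (by norm_num) (by norm_num)]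
        norm_num; linarith
      have := hs ![1, 6] (by intro g; fin_cases g <;> norm_num) h6
      norm_num at this; linarith
    set w : ℝ := p 0 + p 1 with hwdef
    have hw : 0 < w := by rw [hwdef]; linarith
    have hp0' : p 0 ≠ 0 := ne_of_gt hp0
    have hp1' : p 1 ≠ 0 := ne_of_gt hp1
    -- demand of s
    have key1 : 27 * ((p 0 * x 1 0) * (p 1 * x 1 1)^2) = 4 * w^3 := by
      refine le_antisymm (U12 (mul_nonneg hp0.le (hxnn 1 0)) (mul_nonneg hp1.le (hxnn 1 1)) ?_) ?_
      · have := hB 1; linarith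
      · -- lower bound via the equilibrium clause applied to the demand bundle
        set d : Fin 2 → ℝ := ![w / (3 * p 0), 2 * w / (3 * p 1)] with hddef
        have hd0 : d 0 = w / (3 * p 0) := by rw [hddef]; norm_num
        have hd1 : d 1 = 2 * w / (3 * p 1) := by rw [hddef]; norm_num
        have hdnn : ∀ g, 0 ≤ d g := by
          intro g; fin_cases g <;> simp [hddef] <;> positivity
        have hdcost : p 0 * d 0 + p 1 * d 1 = w := by
          rw [hd0, hd1]; field_simp; ring
        have hnot : ¬ cd (1/3) (x 1) < cd (1/3) d := by
          intro h
          have := hs d hdnn h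
          rw [hdcost] at this
          exact lt_irrefl _ this
        have hle : cd (1/3) d ≤ cd (1/3) (x 1) := not_lt.mp hnot
        rw [cd13_le (hdnn 0) (hdnn 1) (hxnn 1 0) (hxnn 1 1), hd0, hd1] at hle
        have hm := mul_le_mul_of_nonneg_left hle (by positivity : (0:ℝ) ≤ 27 * p 0 * p 1^2)
        calc 4 * w^3 = 27 * p 0 * p 1^2 * (w / (3 * p 0) * (2 * w / (3 * p 1))^2) := by
              field_simp; ring
          _ ≤ 27 * p 0 * p 1^2 * (x 1 0 * x 1 1 ^ 2) := hm
          _ = 27 * ((p 0 * x 1 0) * (p 1 * x 1 1)^2) := by ring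
    -- demand of s'
    have key2 : 27 * ((p 0 * x 2 0)^2 * (p 1 * x 2 1)) = 4 * w^3 := by
      refine le_antisymm (U21 (mul_nonneg hp0.le (hxnn 2 0)) (mul_nonneg hp1.le (hxnn 2 1)) ?_) ?_
      · have := hB 2; linarith
      · set d : Fin 2 → ℝ := ![2 * w / (3 * p 0), w / (3 * p 1)] with hddef
        have hd0 : d 0 = 2 * w / (3 * p 0) := by rw [hddef]; norm_num
        have hd1 : d 1 = w / (3 * p 1) := by rw [hddef]; norm_num
        have hdnn : ∀ g, 0 ≤ d g := by
          intro g; fin_cases g <;> simp [hddef] <;> positivity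
        have hdcost : p 0 * d 0 + p 1 * d 1 = w := by
          rw [hd0, hd1]; field_simp; ring
        have hnot : ¬ cd (2/3) (x 2) < cd (2/3) d := by
          intro h
          have := hs' d hdnn h
          rw [hdcost] at this
          exact lt_irrefl _ this
        have hle : cd (2/3) d ≤ cd (2/3) (x 2) := not_lt.mp hnot
        rw [cd23_le (hdnn 0) (hdnn 1) (hxnn 2 0) (hxnn 2 1), hd0, hd1] at hle
        have hm := mul_le_mul_of_nonneg_left hle (by positivity : (0:ℝ) ≤ 27 * p 0^2 * p 1)
        calc 4 * w^3 = 27 * p 0^2 * p 1 * ((2 * w / (3 * p 0))^2 * (w / (3 * p 1))) := by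
              field_simp; ring
          _ ≤ 27 * p 0^2 * p 1 * (x 2 0 ^ 2 * x 2 1) := hm
          _ = 27 * ((p 0 * x 2 0)^2 * (p 1 * x 2 1)) := by ring
    -- family 0 equals both demands
    have hNE01 : cd (1/3) (x 1) ≤ cd (1/3) (x 0) := by
      have := hNE 0 1
      simpa [u, fam] using this
    have hNE02 : cd (2/3) (x 2) ≤ cd (2/3) (x 0) := by
      have := hNE 1 2
      simpa [u, fam] using this
    rw [cd13_le (hxnn 1 0) (hxnn 1 1) (hxnn 0 0) (hxnn 0 1)] at hNE01
    rw [cd23_le (hxnn 2 0) (hxnn 2 1) (hxnn 0 0) (hxnn 0 1)] at hNE02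
    have key01 : 27 * ((p 0 * x 0 0) * (p 1 * x 0 1)^2) = 4 * w^3 := by
      refine le_antisymm (U12 (mul_nonneg hp0.le (hxnn 0 0)) (mul_nonneg hp1.le (hxnn 0 1)) ?_) ?_
      · have := hB 0; linarith
      · have hm := mul_le_mul_of_nonneg_left hNE01 (by positivity : (0:ℝ) ≤ 27 * p 0 * p 1^2)
        calc 4 * w^3 = 27 * ((p 0 * x 1 0) * (p 1 * x 1 1)^2) := key1.symm
          _ = 27 * p 0 * p 1^2 * (x 1 0 * x 1 1 ^ 2) := by ring
          _ ≤ 27 * p 0 * p 1^2 * (x 0 0 * x 0 1 ^ 2) := hm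
          _ = 27 * ((p 0 * x 0 0) * (p 1 * x 0 1)^2) := by ring
    have key02 : 27 * ((p 0 * x 0 0)^2 * (p 1 * x 0 1)) = 4 * w^3 := by
      refine le_antisymm (U21 (mul_nonneg hp0.le (hxnn 0 0)) (mul_nonneg hp1.le (hxnn 0 1)) ?_) ?_
      · have := hB 0; linarith
      · have hm := mul_le_mul_of_nonneg_left hNE02 (by positivity : (0:ℝ) ≤ 27 * p 0^2 * p 1)
        calc 4 * w^3 = 27 * ((p 0 * x 2 0)^2 * (p 1 * x 2 1)) := key2.symm
          _ = 27 * p 0^2 * p 1 * (x 2 0 ^ 2 * x 2 1) := by ring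
          _ ≤ 27 * p 0^2 * p 1 * (x 0 0 ^ 2 * x 0 1) := hm
          _ = 27 * ((p 0 * x 0 0)^2 * (p 1 * x 0 1)) := by ring
    have e1 := Eq12 (u := p 0 * x 0 0) (v := p 1 * x 0 1) (mul_nonneg hp0.le (hxnn 0 0)) (mul_nonneg hp1.le (hxnn 0 1))
      (by have := hB 0; linarith) hw key01
    have e2 := Eq21 (u := p 0 * x 0 0) (v := p 1 * x 0 1) (mul_nonneg hp0.le (hxnn 0 0)) (mul_nonneg hp1.le (hxnn 0 1))
      (by have := hB 0; linarith) hw key02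
    have : w / 3 = 2 * w / 3 := by rw [← e1.1, e2.1]
    have : w = 0 := by linarith
    linarith
end

section
/- There exists an economy with two families in which a market equilibrium from equal endowments fails the individual-fair-share guarantee. Concretely: two goods with one unit each, families f = {h,w}, f' = {h',w'} with Cobb-Douglas coefficients α_h = 0.9, α_w = 0.6, α_{w'} = 0.4, α_{h'} = 0.1; the price p = (1,1) with allocation x_f = (0.9, 0.1), x_{f'} = (0.1, 0.9) from equal endowments (0.5, 0.5) is a market equilibrium (each family's bundle is affordable and any bundle unanimously strictly preferred is unaffordable), yet both wives strictly prefer (0.5, 0.5) to their family's bundle: 0.9^{0.6}·0.1^{0.4} < 0.5. -/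
open Real

noncomputable def cdDemand (a m : ℝ) (p : Fin 2 → ℝ) : Fin 2 → ℝ :=
  ![a * m / p 0, (1 - a) * m / p 1]

theorem cd_lt_cd_cdDemand {a m : ℝ} {p x : Fin 2 → ℝ} (ha₀ : 0 < a) (ha₁ : a < 1) (hm : 0 < m) (hp : ∀ g, 0 < p g)
    (hx : ∀ g, 0 ≤ x g) (hbudget : ∑ g, p g * x g ≤ m) (hne : x ≠ cdDemand a m p) :
    cd a x < cd a (cdDemand a m p) := by
  have hb : 0 < 1 - a := by linarith
  have hp₀ := hp 0
  have hp₁ := hp 1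
  set d := cdDemand a m p
  have hd₀ : d 0 = a * m / p 0 := rfl
  have hd₁ : d 1 = (1 - a) * m / p 1 := rfl
  -- `x g = d g * r g`, and the weighted mean of the ratios `r g` is the share of income spent
  set r₀ := p 0 * x 0 / (a * m) with hr₀_def
  set r₁ := p 1 * x 1 / ((1 - a) * m) with hr₁_def
  have hr₀ : 0 ≤ r₀ := by have := hx 0; positivity
  have hr₁ : 0 ≤ r₁ := by have := hx 1; positivity
  have hx₀ : x 0 = d 0 * r₀ := by rw [hd₀, hr₀_def]; field_simp
  have hx₁ : x 1 = d 1 * r₁ := by rw [hd₁, hr₁_def]; field_simp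
  have hmean : a * r₀ + (1 - a) * r₁ ≤ 1 := by
    rw [Fin.sum_univ_two] at hbudget
    calc a * r₀ + (1 - a) * r₁ = (p 0 * x 0 + p 1 * x 1) / m := by
          rw [hr₀_def, hr₁_def]; field_simp
      _ ≤ 1 := (div_le_one hm).2 hbudget
  have hsplit : cd a x = cd a d * (r₀ ^ a * r₁ ^ (1 - a)) := by
    rw [cd, cd, hx₀, hx₁, mul_rpow (by rw [hd₀]; positivity) hr₀,
      mul_rpow (by rw [hd₁]; positivity) hr₁]
    ring
  have hratio : r₀ ^ a * r₁ ^ (1 - a) < 1 := by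
    by_cases hr : r₀ = r₁
    · rw [← hr, ← rpow_add' hr₀ (by norm_num), add_sub_cancel, rpow_one]
      refine lt_of_le_of_ne (by rw [← hr] at hmean; linarith) fun h₁ => hne ?_
      ext g
      fin_cases g
      · simp [hx₀, h₁]
      · simp [hx₁, ← hr, h₁]
    · exact (geom_mean_lt_arith_mean2_weighted_iff_of_pos ha₀ hb hr₀ hr₁ (by ring)).2 hr
        |>.trans_le hmean
  have hd : 0 < cd a d := by rw [cd, hd₀, hd₁]; positivity
  rw [hsplit]
  exact mul_lt_of_lt_one_right hd hratio

theorem budget_lt_of_pareto_improvement {ι : Type*} {u : ι → (Fin 2 → ℝ) → ℝ}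
    {member : ι → Prop} {a m : ℝ} {p x x' : Fin 2 → ℝ} (ha₀ : 0 < a) (ha₁ : a < 1)
    (hm : 0 < m) (hp : ∀ g, 0 < p g) (hx : x = cdDemand a m p) (i : ι) (hi : member i)
    (hui : u i = cd a) (hx' : ∀ g, 0 ≤ x' g) (hweak : ∀ k, member k → u k x ≤ u k x')
    (hstrict : ∃ j, member j ∧ u j x < u j x') :
    m < ∑ g, p g * x' g := by
  obtain ⟨j, -, hj⟩ := hstrict
  have hne : x' ≠ cdDemand a m p := by rintro rfl; exact hj.ne (congrArg (u j) hx)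
  by_contra! hbudget
  have := hweak i hi
  rw [hui, hx] at this
  exact this.not_gt (cd_lt_cd_cdDemand ha₀ ha₁ hm hp hx' hbudget hne)

theorem cd_const {c : ℝ} (a : ℝ) (hc : 0 ≤ c) : cd a ![c, c] = c := by
  simp [cd, ← rpow_add' hc (by norm_num : a + (1 - a) ≠ 0)]

theorem nine_tenths_rpow_mul_one_tenth_rpow_lt :
    (0.9 : ℝ) ^ (0.6 : ℝ) * (0.1 : ℝ) ^ (0.4 : ℝ) < 0.5 := by
  refine lt_of_pow_lt_pow_left₀ 10 (by norm_num) ?_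
  have h₁ : ((0.9 : ℝ) ^ (0.6 : ℝ)) ^ 10 = (0.9 : ℝ) ^ 6 := by
    rw [← rpow_natCast, ← rpow_mul (by norm_num), ← rpow_natCast]; norm_num
  have h₂ : ((0.1 : ℝ) ^ (0.4 : ℝ)) ^ 10 = (0.1 : ℝ) ^ 4 := by
    rw [← rpow_natCast, ← rpow_mul (by norm_num), ← rpow_natCast]; norm_num
  rw [mul_pow, h₁, h₂]
  norm_num

-- Agents `0, 1, 2, 3` are `h, w, h', w'`.
/-- A market equilibrium from equal endowments that fails individual-fair-share:
agents 0=h, 1=w, 2=h', 3=w' with Cobb-Douglas coefficients .9, .6, .1, .4,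
families {h,w} and {h',w'}, endowment (1,1), price (1,1), allocation
x_f = (0.9, 0.1), x_{f'} = (0.1, 0.9). Both wives strictly prefer (0.5,0.5). -/
theorem stmt_9 :
    let e : Fin 2 → ℝ := ![1, 1]
    let ebar : Fin 2 → ℝ := ![0.5, 0.5]
    let p : Fin 2 → ℝ := ![1, 1]
    let u : Fin 4 → (Fin 2 → ℝ) → ℝ := fun i => cd (![(0.9 : ℝ), 0.6, 0.1, 0.4] i)
    let fam : Fin 4 → Fin 2 := ![0, 0, 1, 1]
    let x : Fin 2 → Fin 2 → ℝ := ![![0.9, 0.1], ![0.1, 0.9]]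
    (∀ f g, 0 ≤ x f g) ∧ (∀ g, ∑ f, x f g ≤ e g) ∧
    (∀ f, (∑ g, p g * x f g) ≤ ∑ g, p g * ebar g) ∧
    (∀ f, ∀ x' : Fin 2 → ℝ, (∀ g, 0 ≤ x' g) →
      ((∀ i, fam i = f → u i x' ≥ u i (x f)) ∧
        ∃ j, fam j = f ∧ u j x' > u j (x f)) →
      (∑ g, p g * ebar g) < ∑ g, p g * x' g) ∧
    u 1 (x (fam 1)) < u 1 ebar ∧ u 3 (x (fam 3)) < u 3 ebar := by
  intro e ebar p u fam x
  have hp : ∀ g, 0 < p g := by intro g; fin_cases g <;> simp [p]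
  have hincome : ∑ g, p g * ebar g = 1 := by norm_num [p, ebar, Fin.sum_univ_two]
  refine ⟨?_, ?_, ?_, ?_, ?_, ?_⟩
  · intro f g; fin_cases f <;> fin_cases g <;> norm_num [x]
  · intro g; fin_cases g <;> norm_num [x, e, Fin.sum_univ_two]
  · intro f; fin_cases f <;> norm_num [x, p, ebar, Fin.sum_univ_two]
  · rintro f x' hx' ⟨hweak, hstrict⟩
    rw [hincome]
    fin_cases f
    · exact budget_lt_of_pareto_improvement (u := u) (member := fun k => fam k = 0) (a := 0.9)
        (by norm_num) (by norm_num) one_pos hp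
        (by ext g; fin_cases g <;> norm_num [x, p, cdDemand]) 0 rfl rfl hx' hweak hstrict
    · exact budget_lt_of_pareto_improvement (u := u) (member := fun k => fam k = 1) (a := 0.1)
        (by norm_num) (by norm_num) one_pos hp
        (by ext g; fin_cases g <;> norm_num [x, p, cdDemand]) 2 rfl rfl hx' hweak hstrict
  · show cd 0.6 ![0.9, 0.1] < cd 0.6 ![0.5, 0.5]
    rw [cd_const _ (by norm_num)]
    show (0.9 : ℝ) ^ (0.6 : ℝ) * (0.1 : ℝ) ^ (1 - 0.6 : ℝ) < 0.5
    rw [show (1 - 0.6 : ℝ) = 0.4 by norm_num]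
    exact nine_tenths_rpow_mul_one_tenth_rpow_lt
  · show cd 0.4 ![0.1, 0.9] < cd 0.4 ![0.5, 0.5]
    rw [cd_const _ (by norm_num)]
    show (0.1 : ℝ) ^ (0.4 : ℝ) * (0.9 : ℝ) ^ (1 - 0.4 : ℝ) < 0.5
    rw [show (1 - 0.4 : ℝ) = 0.6 by norm_num, mul_comm]
    exact nine_tenths_rpow_mul_one_tenth_rpow_lt
end

section
/- In any economy with strictly monotonic and strictly convex preferences, either the equal-split allocation (ē,…,ē) is Pareto-optimal, or there exists a feasible allocation x with u_i(x_{F(i)}) > u_i(ē) for every individual i (an individual-strict-fair-share allocation). In fact, when a leximin-optimal allocation x* differs from equal split, the midpoint allocation (x* + equal-split)/2 strictly improves every member of every family whose bundle differs from ē. -/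
/-- The ascending sorted list of the values of `v`. -/
noncomputable def sortedProfile {ι : Type*} [Fintype ι] (v : ι → ℝ) : List ℝ :=
  (Finset.univ.val.map v).sort (· ≤ ·)

lemma sortedProfile_ne_nil {ι : Type*} [Fintype ι] [Nonempty ι] (v : ι → ℝ) :
    sortedProfile v ≠ [] := by
  intro h
  have hlen : (sortedProfile v).length = Fintype.card ι := by
    simp [sortedProfile]
  rw [h] at hlen
  simp at hlen
  exact Fintype.card_ne_zero hlen.symm

lemma mem_sortedProfile {ι : Type*} [Fintype ι] (v : ι → ℝ) (i : ι) :
    v i ∈ sortedProfile v := by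
  simp only [sortedProfile, Multiset.mem_sort, Multiset.mem_map]
  exact ⟨i, Finset.mem_val.mpr (Finset.mem_univ i), rfl⟩

lemma of_mem_sortedProfile {ι : Type*} [Fintype ι] (v : ι → ℝ) {a : ℝ}
    (ha : a ∈ sortedProfile v) : ∃ i, v i = a := by
  simp only [sortedProfile, Multiset.mem_sort, Multiset.mem_map] at ha
  obtain ⟨i, _, hi⟩ := ha
  exact ⟨i, hi⟩

lemma sortedProfile_sorted {ι : Type*} [Fintype ι] (v : ι → ℝ) :
    (sortedProfile v).Pairwise (· ≤ ·) :=
  Multiset.pairwise_sort _ _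

/-- With strictly monotonic and strictly convex preferences (normalized so that
`u i (t • e) = t - 1/|F|`), either equal split is Pareto-optimal or an
individual-strict-fair-share allocation exists; moreover, if a leximin-optimal
allocation differs from equal split, then the midpoint allocation strictly
improves (over `ē`) every member of every family whose bundle differs from `ē`. -/
theorem stmt_11 {I F G : Type*} [Fintype I] [Fintype F] [Fintype G]
    [Nonempty I] [Nonempty F]
    (fam : I → F) (hsurj : Function.Surjective fam)
    (e : G → ℝ) (he : ∀ g, 0 < e g)
    (u : I → (G → ℝ) → ℝ) (hu : ∀ i, Continuous (u i))
    (hmono : ∀ i (x x' : G → ℝ), (∀ g, x g ≤ x' g) → x ≠ x' → u i x < u i x')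
    (hconv : ∀ i (x x' : G → ℝ) (α : ℝ), 0 < α → α < 1 →
      u i x ≥ u i x' → x ≠ x' → u i ((1 - α) • x + α • x') > u i x')
    (hnorm : ∀ i (t : ℝ), 0 ≤ t → u i (t • e) = t - 1 / (Fintype.card F : ℝ)) :
    let ebar : G → ℝ := (1 / (Fintype.card F : ℝ)) • e
    let Feasible : (F → G → ℝ) → Prop := fun x =>
      (∀ f g, 0 ≤ x f g) ∧ ∀ g, ∑ f, x f g ≤ e g
    let PO : (F → G → ℝ) → Prop := fun x => ¬ ∃ y, Feasible y ∧
      (∀ i, u i (y (fam i)) ≥ u i (x (fam i))) ∧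
      ∃ j, u j (y (fam j)) > u j (x (fam j))
    let Leximin : (F → G → ℝ) → Prop := fun xs => Feasible xs ∧
      ∀ y, Feasible y →
        ¬ List.Lex (· < ·) (sortedProfile (fun i => u i (xs (fam i))))
          (sortedProfile (fun i => u i (y (fam i))))
    (PO (fun _ => ebar) ∨ ∃ x, Feasible x ∧ ∀ i, u i (x (fam i)) > u i ebar) ∧
    (∀ xs, Leximin xs → xs ≠ (fun _ => ebar) →
      ∀ f, xs f ≠ ebar → ∀ i, fam i = f →
        u i ((1 / 2 : ℝ) • xs f + (1 / 2 : ℝ) • ebar) > u i ebar) := by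
  classical
  intro ebar Feasible PO Leximin
  have hncard : 0 < Fintype.card F := Fintype.card_pos
  set n : ℝ := (Fintype.card F : ℝ) with hn
  have hnpos : 0 < n := by positivity
  have hebar : ebar = (1 / n) • e := rfl
  have hebarpos : ∀ g, 0 < ebar g := by
    intro g
    have := he g
    simp only [hebar, Pi.smul_apply, smul_eq_mul]
    positivity
  have hzero : ∀ i, u i ebar = 0 := by
    intro i
    rw [hebar, hnorm i (1 / n) (by positivity)]
    ring
  have hfeas_e : Feasible (fun _ => ebar) := by
    constructor
    · intro f g; exact (hebarpos g).le
    · intro g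
      simp only [hebar, Pi.smul_apply, smul_eq_mul, Finset.sum_const, Finset.card_univ,
        nsmul_eq_mul]
      rw [← hn]
      field_simp
      exact le_rfl
  -- midpoint lemma
  have hmid : ∀ i (x : G → ℝ), u i x ≥ u i ebar → x ≠ ebar →
      u i ((1 / 2 : ℝ) • x + (1 / 2 : ℝ) • ebar) > u i ebar := by
    intro i x hge hne
    have h := hconv i x ebar (1 / 2) (by norm_num) (by norm_num) hge hne
    have h12 : (1 - 1 / 2 : ℝ) = 1 / 2 := by norm_num
    rwa [h12] at h
  constructor
  · -- first part
    by_cases hPO : PO (fun _ => ebar)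
    · exact Or.inl hPO
    · right
      simp only [PO, not_not] at hPO
      obtain ⟨y, hyF, hyge, j, hjgt⟩ := hPO
      set f0 := fam j with hf0
      -- midpoint allocation z
      set z : F → G → ℝ := fun f => (1 / 2 : ℝ) • y f + (1 / 2 : ℝ) • ebar with hz
      have hznn : ∀ f g, 0 ≤ z f g := by
        intro f g
        have := hyF.1 f g
        have := (hebarpos g).le
        simp only [hz, Pi.add_apply, Pi.smul_apply, smul_eq_mul]
        linarith
      have hzsum : ∀ g, ∑ f, z f g ≤ e g := by
        intro g
        have h1 := hyF.2 g
        have h2 : ∑ f : F, ebar g = e g := by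
          simp only [hebar, Pi.smul_apply, smul_eq_mul, Finset.sum_const, Finset.card_univ,
            nsmul_eq_mul]
          rw [← hn]; field_simp
        calc ∑ f, z f g = (1/2) * (∑ f, y f g) + (1/2) * (∑ f : F, ebar g) := by
              simp only [hz, Pi.add_apply, Pi.smul_apply, smul_eq_mul]
              rw [Finset.sum_add_distrib, Finset.mul_sum, Finset.mul_sum]
          _ ≤ (1/2) * e g + (1/2) * e g := by rw [h2]; nlinarith
          _ = e g := by ring
      have hzge : ∀ i, 0 ≤ u i (z (fam i)) := by
        intro i
        by_cases hyeq : y (fam i) = ebar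
        · have : z (fam i) = ebar := by
            simp only [hz, hyeq]
            funext g
            simp only [Pi.add_apply, Pi.smul_apply, smul_eq_mul]
            ring
          rw [this, hzero]
        · have := hmid i (y (fam i)) (by rw [hzero]; exact (hzero i ▸ hyge i)) hyeq
          rw [hzero] at this
          exact this.le
      have hzpos : ∀ i, y (fam i) ≠ ebar → 0 < u i (z (fam i)) := by
        intro i hyne
        have := hmid i (y (fam i)) (hzero i ▸ hyge i) hyne
        rwa [hzero] at this
      have hyf0 : y f0 ≠ ebar := by
        intro h
        rw [h] at hjgt
        exact lt_irrefl _ hjgt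
      have hz0pos : ∀ g, 0 < z f0 g := by
        intro g
        have h1 := hyF.1 f0 g
        have h2 := hebarpos g
        simp only [hz, Pi.add_apply, Pi.smul_apply, smul_eq_mul]
        nlinarith
      -- choose δ
      have hδex : ∃ δ : ℝ, 0 < δ ∧ δ < 1 ∧
          ∀ i, fam i = f0 → 0 < u i ((1 - δ) • z f0) := by
        have hev : ∀ᶠ t in nhdsWithin (0:ℝ) (Set.Ioi 0),
            ∀ i, fam i = f0 → 0 < u i ((1 - t) • z f0) := by
          rw [Filter.eventually_all]
          intro i
          by_cases hif : fam i = f0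
          · have hcont : ContinuousAt (fun t : ℝ => u i ((1 - t) • z f0)) 0 := by
              apply Continuous.continuousAt
              exact (hu i).comp ((continuous_const.sub continuous_id).smul continuous_const)
            have hval : (fun t : ℝ => u i ((1 - t) • z f0)) 0 = u i (z f0) := by
              simp
            have hpos : 0 < u i (z f0) := by
              have := hzpos i (hif ▸ hyf0)
              rwa [hif] at this
            have : ∀ᶠ t in nhds (0:ℝ), 0 < u i ((1 - t) • z f0) := by
              have h2 : ∀ᶠ s in nhds ((fun t : ℝ => u i ((1 - t) • z f0)) 0), 0 < s := by
                rw [hval]; exact eventually_gt_nhds hpos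
              exact Filter.Tendsto.eventually hcont h2
            exact ((this.filter_mono nhdsWithin_le_nhds).mono fun t ht _ => ht)
          · exact Filter.Eventually.of_forall fun t ht => absurd ht hif
        have hlt1 : ∀ᶠ t in nhdsWithin (0:ℝ) (Set.Ioi 0), t < 1 := by
          have : Set.Ioo (0:ℝ) 1 ∈ nhdsWithin (0:ℝ) (Set.Ioi 0) :=
            Ioo_mem_nhdsGT_of_mem (by norm_num)
          exact Filter.eventually_of_mem this fun t ht => ht.2
        have hgt0 : ∀ᶠ t in nhdsWithin (0:ℝ) (Set.Ioi 0), 0 < t :=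
          eventually_mem_nhdsWithin
        obtain ⟨δ, h1, h2, h3⟩ := (hgt0.and (hlt1.and hev)).exists
        exact ⟨δ, h1, h2, h3⟩
      obtain ⟨δ, hδ0, hδ1, hδu⟩ := hδex
      set c : ℝ := δ / (n - 1) with hc
      have hcnn : 0 ≤ c := by
        rcases le_or_gt n 1 with h | h
        · have h1n : (1:ℝ) ≤ n := by rw [hn]; exact_mod_cast hncard
          have : n = 1 := le_antisymm h h1n
          rw [hc, this]
          simp
        · exact div_nonneg hδ0.le (by linarith)
      set w : F → G → ℝ := fun f => if f = f0 then (1 - δ) • z f0 else z f + c • z f0 with hw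
      refine ⟨w, ⟨?_, ?_⟩, ?_⟩
      · intro f g
        by_cases hf : f = f0
        · simp only [hw, hf, if_pos rfl, Pi.smul_apply, smul_eq_mul]
          have := hznn f0 g
          nlinarith
        · simp only [hw, if_neg hf, Pi.add_apply, Pi.smul_apply, smul_eq_mul]
          have := hznn f g
          have := hznn f0 g
          nlinarith
      · intro g
        have hsplit : ∑ f, w f g =
            ∑ f ∈ Finset.univ.erase f0, (z f g + c * z f0 g) + (1 - δ) * z f0 g := by
          rw [← Finset.sum_erase_add _ _ (Finset.mem_univ f0)]
          congr 1
          · apply Finset.sum_congr rfl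
            intro f hf
            simp only [hw, if_neg (Finset.mem_erase.mp hf).1, Pi.add_apply, Pi.smul_apply,
              smul_eq_mul]
          · simp only [hw, if_pos rfl, Pi.smul_apply, smul_eq_mul]
        have hcard : ((Finset.univ.erase f0).card : ℝ) = n - 1 := by
          rw [Finset.card_erase_of_mem (Finset.mem_univ f0), Finset.card_univ]
          rw [hn]
          rw [Nat.cast_sub hncard]
          simp
        have hsum2 : ∑ f ∈ Finset.univ.erase f0, (z f g + c * z f0 g) =
            ∑ f ∈ Finset.univ.erase f0, z f g + (n - 1) * (c * z f0 g) := by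
          rw [Finset.sum_add_distrib, Finset.sum_const, nsmul_eq_mul, hcard]
        have hcoef : (n - 1) * c ≤ δ := by
          rcases eq_or_ne n 1 with h | h
          · rw [h]; simpa using hδ0.le
          · rw [hc, mul_div_cancel₀ _ (sub_ne_zero.mpr h)]
        have hzsplit : ∑ f, z f g = ∑ f ∈ Finset.univ.erase f0, z f g + z f0 g := by
          rw [Finset.sum_erase_add _ _ (Finset.mem_univ f0)]
        have hle : ∑ f, w f g ≤ ∑ f, z f g := by
          rw [hsplit, hsum2, hzsplit]
          have hz0 := (hz0pos g).le
          nlinarith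
        exact hle.trans (hzsum g)
      · intro i
        rw [hzero]
        by_cases hf : fam i = f0
        · have := hδu i hf
          simp only [hw, hf, if_pos rfl]
          exact this
        · simp only [hw, if_neg hf]
          have hle : ∀ g, z (fam i) g ≤ (z (fam i) + c • z f0) g := by
            intro g
            simp only [Pi.add_apply, Pi.smul_apply, smul_eq_mul]
            have h1 := hcnn
            have h2 := (hz0pos g).le
            nlinarith
          have hcpos : 0 < c := by
            have h2 : (1:ℕ) < Fintype.card F := Fintype.one_lt_card_iff.mpr ⟨fam i, f0, hf⟩
            have h3 : (1:ℝ) < n := by rw [hn]; exact_mod_cast h2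
            rw [hc]
            exact div_pos hδ0 (by linarith)
          have hGne : Nonempty G := by
            by_contra hG
            exact hyf0 (funext fun g => (hG ⟨g⟩).elim)
          have hne : z (fam i) ≠ z (fam i) + c • z f0 := by
            intro h
            obtain ⟨g⟩ := hGne
            · have := congrFun h g
              simp only [Pi.add_apply, Pi.smul_apply, smul_eq_mul] at this
              have := hz0pos g
              nlinarith
          have := hmono i _ _ hle hne
          have hz0' := hzge i
          linarith
  · -- second part
    intro xs hlex hne f hf i hfi
    have hFS : ∀ k, 0 ≤ u k (xs (fam k)) := by
      by_contra hcon
      push_neg at hcon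
      obtain ⟨j, hj⟩ := hcon
      apply hlex.2 (fun _ => ebar) hfeas_e
      set L1 := sortedProfile (fun i => u i (xs (fam i))) with hL1
      set L2 := sortedProfile (fun i : I => u i ebar) with hL2
      obtain ⟨a, t1, h1⟩ := List.exists_cons_of_ne_nil
        (sortedProfile_ne_nil (fun i => u i (xs (fam i))))
      obtain ⟨b, t2, h2⟩ := List.exists_cons_of_ne_nil
        (sortedProfile_ne_nil (fun i : I => u i ebar))
      have ha : a < 0 := by
        have hmem := mem_sortedProfile (fun i => u i (xs (fam i))) j
        have hs := sortedProfile_sorted (fun i => u i (xs (fam i)))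
        rw [h1, List.pairwise_cons] at hs
        rw [h1] at hmem
        rcases List.mem_cons.mp hmem with h | h
        · rw [← h]; exact hj
        · exact lt_of_le_of_lt (hs.1 _ h) hj
      have hb : b = 0 := by
        have hmem : b ∈ sortedProfile (fun i : I => u i ebar) := by
          rw [h2]; exact List.mem_cons_self
        obtain ⟨k, hk⟩ := of_mem_sortedProfile _ hmem
        rw [← hk, hzero]
      rw [hL1, hL2, h1, h2]
      exact List.Lex.rel (by rw [hb]; exact ha)
    have hge : u i (xs f) ≥ u i ebar := by
      rw [hzero, ← hfi]
      exact hFS i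
    exact hmid i (xs f) hge hf
end

section
/- Let x* maximize the leximin order of the aggregate family utilities U_f(x_f) = ∏_{i∈f} u_i(x_f) over the set E of individual-fair-share feasible allocations, in an economy with strictly monotonic preferences where some individual-strict-FS allocation exists. Then all families have equal aggregate utility at x*: U_f(x*_f) = U_{f'}(x*_{f'}) > 0 for all f, f' ∈ F. -/
/-!
Positivity: an allocation in which every individual is strictly better off than at the fair
share beats, in the leximin order, any allocation in which some family has aggregate utility
`0`. Equality: if some family `f₀` is strictly above the minimum, move a small amount `t` of a
good it holds to a common pool shared equally by all families. Every other family gains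
strictly, and by continuity `f₀` stays above the old minimum for `t` small. So the minimum goes
up, which contradicts optimality.
-/

open Finset Filter Topology

section SortedProfile

variable {ι : Type*} [Fintype ι] [Nonempty ι]

lemma exists_sortedProfile_eq_cons (v : ι → ℝ) :
    ∃ a t, sortedProfile v = a :: t ∧ (∃ j, v j = a) ∧ ∀ j, a ≤ v j := by
  have hmem : ∀ a, a ∈ sortedProfile v ↔ ∃ j, v j = a := by
    simp [sortedProfile, Multiset.mem_sort]
  obtain ⟨a, t, hat⟩ : ∃ a t, sortedProfile v = a :: t :=
    List.exists_cons_of_ne_nil fun h => by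
      simpa [h] using (hmem (v (Classical.arbitrary ι))).2 ⟨_, rfl⟩
  have hsorted : (a :: t).Pairwise (· ≤ ·) := hat ▸ Multiset.pairwise_sort _ _
  refine ⟨a, t, hat, (hmem a).1 (hat ▸ List.mem_cons_self), fun j => ?_⟩
  rcases List.mem_cons.1 (hat ▸ (hmem (v j)).2 ⟨j, rfl⟩) with h | h
  · exact h.ge
  · exact (List.pairwise_cons.1 hsorted).1 _ h

lemma lex_sortedProfile_of_le_of_lt {v w : ι → ℝ} {c : ℝ} {j : ι} (hv : v j ≤ c)
    (hw : ∀ k, c < w k) : List.Lex (· < ·) (sortedProfile v) (sortedProfile w) := by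
  obtain ⟨a, t, hat, -, hamin⟩ := exists_sortedProfile_eq_cons v
  obtain ⟨b, s, hbs, ⟨k, rfl⟩, -⟩ := exists_sortedProfile_eq_cons w
  rw [hat, hbs]
  exact List.Lex.rel (((hamin j).trans hv).trans_lt (hw k))

end SortedProfile

lemma exists_pos_of_strictMono_lt {G : Type*} {φ : (G → ℝ) → ℝ} (hφ : StrictMono φ) {b c : G → ℝ}
    (hc : 0 ≤ c) (hlt : φ c < φ b) : ∃ g, 0 < b g := by
  by_contra! h
  exact (hφ.monotone fun g => (h g).trans (hc g)).not_gt hlt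

section Transfer

variable {F G : Type*} [Fintype F] [DecidableEq F] [DecidableEq G]

noncomputable def transfer (x : F → G → ℝ) (f₀ : F) (g₀ : G) (t : ℝ) (f : F) : G → ℝ :=
  x f + Pi.single g₀ (t / Fintype.card F) - if f = f₀ then Pi.single g₀ t else 0

variable {x : F → G → ℝ} {f₀ : F} {g₀ : G} {t : ℝ}

@[simp]
lemma transfer_zero : transfer x f₀ g₀ 0 = x := by
  ext f g
  simp [transfer]

lemma continuous_transfer (x : F → G → ℝ) (f₀ : F) (g₀ : G) (f : F) :
    Continuous fun t => transfer x f₀ g₀ t f := by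
  have hsingle : Continuous fun s : ℝ => (Pi.single g₀ s : G → ℝ) :=
    continuous_single (A := fun _ => ℝ) g₀
  refine (continuous_const.add (hsingle.comp (continuous_id.div_const _))).sub ?_
  split_ifs
  exacts [hsingle, continuous_const]

lemma sum_transfer : ∑ f, transfer x f₀ g₀ t f = ∑ f, x f := by
  have hcard : (Fintype.card F : ℝ) ≠ 0 := Nat.cast_ne_zero.2 (Fintype.card_pos_iff.2 ⟨f₀⟩).ne'
  simp only [transfer, sum_sub_distrib, sum_add_distrib, sum_const, card_univ, sum_ite_eq',
    mem_univ, if_true, ← Pi.single_smul, nsmul_eq_mul, mul_div_cancel₀ _ hcard,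
    add_sub_cancel_right]

lemma lt_transfer_of_ne (ht : 0 < t) {f : F} (hf : f ≠ f₀) : x f < transfer x f₀ g₀ t f := by
  have hcard : (0 : ℝ) < Fintype.card F := Nat.cast_pos.2 (Fintype.card_pos_iff.2 ⟨f₀⟩)
  rw [transfer, if_neg hf, sub_zero]
  exact lt_add_of_pos_right _ (Pi.single_pos.2 (div_pos ht hcard))

lemma transfer_nonneg (hx : ∀ f, 0 ≤ x f) (ht : 0 ≤ t) (ht' : t ≤ x f₀ g₀) (f : F) :
    0 ≤ transfer x f₀ g₀ t f := by
  intro g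
  have hshare : 0 ≤ t / Fintype.card F := by positivity
  have hxg : 0 ≤ x f g := hx f g
  rw [transfer]
  rcases eq_or_ne f f₀ with rfl | hf
  · simp only [if_pos, Pi.sub_apply, Pi.add_apply, Pi.single_apply, Pi.zero_apply]
    split_ifs with hg
    · subst hg
      linarith
    · linarith
  · simp only [if_neg hf, Pi.sub_apply, Pi.add_apply, Pi.single_apply, Pi.zero_apply]
    split_ifs <;> linarith

end Transfer

section Economy

variable {I F G : Type*} [Fintype I] [DecidableEq F]

def IsFeasible [Fintype F] (e : G → ℝ) (x : F → G → ℝ) : Prop :=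
  (∀ f g, 0 ≤ x f g) ∧ ∀ g, ∑ f, x f g ≤ e g

def familyUtility (fam : I → F) (u : I → (G → ℝ) → ℝ) (f : F) (b : G → ℝ) : ℝ :=
  ∏ i ∈ univ.filter (fun i => fam i = f), u i b

variable {fam : I → F} {u : I → (G → ℝ) → ℝ}

lemma familyUtility_pos {f : F} {b : G → ℝ} (h : ∀ i, fam i = f → 0 < u i b) :
    0 < familyUtility fam u f b :=
  prod_pos fun i hi => h i (mem_filter.1 hi).2

lemma utility_pos_of_familyUtility_pos {i : I} {b : G → ℝ} (hnonneg : 0 ≤ u i b)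
    (hU : 0 < familyUtility fam u (fam i) b) : 0 < u i b :=
  hnonneg.lt_of_ne fun h => hU.ne' (prod_eq_zero (mem_filter.2 ⟨mem_univ i, rfl⟩) h.symm)

lemma familyUtility_lt (hsurj : Function.Surjective fam) (hmono : ∀ i, StrictMono (u i))
    {f : F} {b b' : G → ℝ} (hpos : ∀ i, fam i = f → 0 < u i b) (hlt : b < b') :
    familyUtility fam u f b < familyUtility fam u f b' :=
  prod_lt_prod_of_nonempty (fun i hi => hpos i (mem_filter.1 hi).2)
    (fun i _ => hmono i hlt) (let ⟨i, hi⟩ := hsurj f; ⟨i, mem_filter.2 ⟨mem_univ i, hi⟩⟩)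

lemma continuous_familyUtility (fam : I → F) (hu : ∀ i, Continuous (u i)) (f : F) :
    Continuous (familyUtility fam u f) :=
  continuous_finsetProd _ fun i _ => hu i

lemma exists_feasible_forall_lt [Fintype F] [DecidableEq G] {e : G → ℝ}
    (hsurj : Function.Surjective fam) (hu : ∀ i, Continuous (u i))
    (hmono : ∀ i, StrictMono (u i)) {x : F → G → ℝ} (hx : IsFeasible e x)
    (hxu : ∀ i, 0 < u i (x (fam i))) {m : ℝ} (hmin : ∀ f, m ≤ familyUtility fam u f (x f))
    {f₀ : F} (hf₀ : m < familyUtility fam u f₀ (x f₀)) {g₀ : G} (hg₀ : 0 < x f₀ g₀) :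
    ∃ y, IsFeasible e y ∧ (∀ i, 0 < u i (y (fam i))) ∧ ∀ f, m < familyUtility fam u f (y f) := by
  have hclose : ∀ᶠ t in 𝓝 0, t < x f₀ g₀ ∧ (∀ i, 0 < u i (transfer x f₀ g₀ t (fam i))) ∧
      m < familyUtility fam u f₀ (transfer x f₀ g₀ t f₀) := by
    refine (eventually_lt_nhds hg₀).and ((eventually_all.2 fun i => ?_).and ?_)
    · have h := ((hu i).comp (continuous_transfer x f₀ g₀ (fam i))).tendsto 0
      simp only [Function.comp_def, transfer_zero] at h
      exact h.eventually (eventually_gt_nhds (hxu i))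
    · have h :=
        ((continuous_familyUtility fam hu f₀).comp (continuous_transfer x f₀ g₀ f₀)).tendsto 0
      simp only [Function.comp_def, transfer_zero] at h
      exact h.eventually (eventually_gt_nhds hf₀)
  obtain ⟨t, ht, htx, hyu, hyf₀⟩ := hclose.exists_gt
  refine ⟨transfer x f₀ g₀ t, ⟨fun f => transfer_nonneg (fun f => hx.1 f) ht.le htx.le f,
    fun g => ?_⟩, hyu, fun f => ?_⟩
  · simpa only [← Finset.sum_apply, sum_transfer] using hx.2 g
  · rcases eq_or_ne f f₀ with rfl | hf
    · exact hyf₀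
    · refine (hmin f).trans_lt (familyUtility_lt hsurj hmono (fun i hi => ?_)
        (lt_transfer_of_ne ht hf))
      simpa only [hi] using hxu i

end Economy

theorem stmt_13_general {I F G : Type*} [Fintype I] [Fintype F] [Nonempty F] [DecidableEq F]
    (fam : I → F) (hsurj : Function.Surjective fam)
    (e : G → ℝ) (he : ∀ g, 0 < e g)
    (u : I → (G → ℝ) → ℝ) (hu : ∀ i, Continuous (u i))
    (hmono : ∀ i (x x' : G → ℝ), (∀ g, x g ≤ x' g) → x ≠ x' → u i x < u i x')
    (hnorm : ∀ i, u i ((1 / (Fintype.card F : ℝ)) • e) = 0) :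
    let Feasible : (F → G → ℝ) → Prop := fun x =>
      (∀ f g, 0 ≤ x f g) ∧ ∀ g, ∑ f, x f g ≤ e g
    let E : (F → G → ℝ) → Prop := fun x => Feasible x ∧ ∀ i, 0 ≤ u i (x (fam i))
    let U : F → (G → ℝ) → ℝ := fun f b =>
      ∏ i ∈ Finset.univ.filter (fun i => fam i = f), u i b
    ∀ xs, E xs →
      (∀ y, E y → ¬ List.Lex (· < ·) (sortedProfile (fun f => U f (xs f)))
        (sortedProfile (fun f => U f (y f)))) →
      (∃ x', E x' ∧ ∀ i, 0 < u i (x' (fam i))) →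
      ∀ f f', U f (xs f) = U f' (xs f') ∧ 0 < U f (xs f) := by
  classical
  intro Feasible E U xs hxs hopt ⟨x', hx', hx'u⟩ f f'
  have hmono' : ∀ i, StrictMono (u i) := fun i _ _ h => hmono i _ _ h.le h.ne
  have hUpos : ∀ f, 0 < U f (xs f) := by
    by_contra! ⟨f, hf⟩
    exact hopt x' hx' (lex_sortedProfile_of_le_of_lt hf fun k =>
      familyUtility_pos fun i hi => hi ▸ hx'u i)
  have hxsu : ∀ i, 0 < u i (xs (fam i)) := fun i =>
    utility_pos_of_familyUtility_pos (hxs.2 i) (hUpos (fam i))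
  obtain ⟨fmin, hfmin⟩ := Finite.exists_min fun f => U f (xs f)
  have hall : ∀ f, U f (xs f) = U fmin (xs fmin) := by
    intro f₀
    by_contra hne
    have hf₀ : U fmin (xs fmin) < U f₀ (xs f₀) := (hfmin f₀).lt_of_ne' hne
    obtain ⟨i₀, rfl⟩ := hsurj f₀
    have hshare : 0 ≤ (1 / (Fintype.card F : ℝ)) • e := fun g =>
      mul_nonneg (by positivity) (he g).le
    obtain ⟨g₀, hg₀⟩ := exists_pos_of_strictMono_lt (hmono' i₀) hshare ((hnorm i₀).trans_lt (hxsu i₀))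
    obtain ⟨y, hy, hyu, hym⟩ := exists_feasible_forall_lt hsurj hu hmono' hxs.1 hxsu hfmin hf₀ hg₀
    exact hopt y ⟨hy, fun i => (hyu i).le⟩ (lex_sortedProfile_of_le_of_lt le_rfl hym)
  exact ⟨(hall f).trans (hall f').symm, hUpos f⟩

/-- At a leximin optimum (w.r.t. the product aggregate family utilities) over the
set E of individual-fair-share allocations, all families have equal and strictly
positive aggregate utility, provided some individual-strict-FS allocation exists. -/
theorem stmt_13 {I F G : Type*} [Fintype I] [Fintype F] [Fintype G] [Nonempty F] [DecidableEq F]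
    (fam : I → F) (hsurj : Function.Surjective fam)
    (e : G → ℝ) (he : ∀ g, 0 < e g)
    (u : I → (G → ℝ) → ℝ) (hu : ∀ i, Continuous (u i))
    (hmono : ∀ i (x x' : G → ℝ), (∀ g, x g ≤ x' g) → x ≠ x' → u i x < u i x')
    (hnorm : ∀ i, u i ((1 / (Fintype.card F : ℝ)) • e) = 0) :
    let Feasible : (F → G → ℝ) → Prop := fun x =>
      (∀ f g, 0 ≤ x f g) ∧ ∀ g, ∑ f, x f g ≤ e g
    let E : (F → G → ℝ) → Prop := fun x => Feasible x ∧ ∀ i, 0 ≤ u i (x (fam i))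
    let U : F → (G → ℝ) → ℝ := fun f b =>
      ∏ i ∈ Finset.univ.filter (fun i => fam i = f), u i b
    ∀ xs, E xs →
      (∀ y, E y → ¬ List.Lex (· < ·) (sortedProfile (fun f => U f (xs f)))
        (sortedProfile (fun f => U f (y f)))) →
      (∃ x', E x' ∧ ∀ i, 0 < u i (x' (fam i))) →
      ∀ f f', U f (xs f) = U f' (xs f') ∧ 0 < U f (xs f) :=
  stmt_13_general fam hsurj e he u hu hmono hnorm
end

section
/- There exists an economy with two families of two individuals each, two goods, and strictly monotonic strictly convex single-crossing preferences (e.g., Cobb-Douglas with MRS ordering w < h < h' < w' at every bundle), that admits no individual-egalitarian-equivalent Pareto-optimal allocation. Reason: under pairwise single crossing within each family, an individual-EE allocation with reference bundle r forces x_f = x_{f'} = r, and the resulting allocation (r, r) has disjoint MRS-ranges for the two families, so it is not Pareto-optimal. -/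
lemma cd_pos {a : ℝ} {x : Fin 2 → ℝ} (h0 : 0 < x 0) (h1 : 0 < x 1) : 0 < cd a x :=
  mul_pos (Real.rpow_pos_of_pos h0 _) (Real.rpow_pos_of_pos h1 _)

lemma cd_zero {a : ℝ} (ha : 0 < a) (ha1 : a < 1) {x : Fin 2 → ℝ}
    (h : x 0 = 0 ∨ x 1 = 0) : cd a x = 0 := by
  unfold cd
  rcases h with h | h <;> rw [h]
  · rw [Real.zero_rpow (ne_of_gt ha), zero_mul]
  · rw [Real.zero_rpow (by linarith), mul_zero]

lemma cd_scale (a : ℝ) (v r : Fin 2 → ℝ) (hv0 : 0 ≤ v 0) (hv1 : 0 ≤ v 1)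
    (hr0 : 0 ≤ r 0) (hr1 : 0 ≤ r 1) :
    cd a (fun g => v g * r g) = (v 0 ^ a * v 1 ^ (1 - a)) * cd a r := by
  unfold cd
  simp only
  rw [Real.mul_rpow hv0 hr0, Real.mul_rpow hv1 hr1]
  ring

lemma mix (c d : ℝ) (m n : ℕ) (hc : 0 < c) (hd : 0 < d) (h8 : (m : ℝ) + n = 8)
    (h : 1 < c ^ m * d ^ n) : 1 < c ^ ((m : ℝ) / 8) * d ^ ((n : ℝ) / 8) := by
  by_contra hle
  push_neg at hle
  have hz : 0 < c ^ ((m : ℝ) / 8) * d ^ ((n : ℝ) / 8) :=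
    mul_pos (Real.rpow_pos_of_pos hc _) (Real.rpow_pos_of_pos hd _)
  have h8' : (c ^ ((m : ℝ) / 8) * d ^ ((n : ℝ) / 8)) ^ (8:ℕ) = c ^ m * d ^ n := by
    rw [mul_pow, ← Real.rpow_natCast (c ^ ((m : ℝ) / 8)) 8,
      ← Real.rpow_natCast (d ^ ((n : ℝ) / 8)) 8,
      ← Real.rpow_mul hc.le, ← Real.rpow_mul hd.le]
    norm_num
  have : (c ^ ((m : ℝ) / 8) * d ^ ((n : ℝ) / 8)) ^ (8:ℕ) ≤ 1 :=
    pow_le_one₀ hz.le hle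
  rw [h8'] at this
  linarith

lemma cd_inj {a b : ℝ} (ha : 0 < a) (ha1 : a < 1) (hb : 0 < b) (hb1 : b < 1)
    (hab : a ≠ b) {x r : Fin 2 → ℝ} (hx0 : 0 < x 0) (hx1 : 0 < x 1)
    (hr0 : 0 < r 0) (hr1 : 0 < r 1)
    (h1 : cd a x = cd a r) (h2 : cd b x = cd b r) : x 0 = r 0 ∧ x 1 = r 1 := by
  have la : a * Real.log (x 0) + (1 - a) * Real.log (x 1)
      = a * Real.log (r 0) + (1 - a) * Real.log (r 1) := by
    have := congrArg Real.log h1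
    rwa [cd, cd, Real.log_mul (by positivity) (by positivity),
      Real.log_mul (by positivity) (by positivity),
      Real.log_rpow hx0, Real.log_rpow hx1, Real.log_rpow hr0, Real.log_rpow hr1] at this
  have lb : b * Real.log (x 0) + (1 - b) * Real.log (x 1)
      = b * Real.log (r 0) + (1 - b) * Real.log (r 1) := by
    have := congrArg Real.log h2
    rwa [cd, cd, Real.log_mul (by positivity) (by positivity),
      Real.log_mul (by positivity) (by positivity),
      Real.log_rpow hx0, Real.log_rpow hx1, Real.log_rpow hr0, Real.log_rpow hr1] at this
  set P := Real.log (x 0) - Real.log (r 0) with hP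
  set Q := Real.log (x 1) - Real.log (r 1) with hQ
  have hPQ : P = Q := by
    have h3 : a * P + (1 - a) * Q = 0 := by simp [hP, hQ]; ring_nf; linarith
    have h4 : b * P + (1 - b) * Q = 0 := by simp [hP, hQ]; ring_nf; linarith
    have : (a - b) * (P - Q) = 0 := by ring_nf; linarith
    rcases mul_eq_zero.1 this with h | h
    · exact absurd (by linarith) hab
    · linarith
  have hP0 : P = 0 := by
    have h3 : a * P + (1 - a) * Q = 0 := by simp [hP, hQ]; ring_nf; linarith
    rw [← hPQ] at h3; linarith [h3]
  have hQ0 : Q = 0 := by rw [← hPQ]; exact hP0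
  constructor
  · have : Real.log (x 0) = Real.log (r 0) := by simp [hP] at hP0; linarith
    exact Real.log_injOn_pos (Set.mem_Ioi.mpr hx0) (Set.mem_Ioi.mpr hr0) this
  · have : Real.log (x 1) = Real.log (r 1) := by simp [hQ] at hQ0; linarith
    exact Real.log_injOn_pos (Set.mem_Ioi.mpr hx1) (Set.mem_Ioi.mpr hr1) this

/-- There is a two-family economy (families {h,w} and {h',w'}, agents 0=h, 1=w,
2=h', 3=w') with strictly monotonic strictly convex single-crossing Cobb-Douglas
preferences ordered α_w < α_h < α_{h'} < α_{w'}, admitting no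
individual-egalitarian-equivalent Pareto-optimal allocation. -/
theorem stmt_15 : ∃ α : Fin 4 → ℝ,
    (∀ i, α i ∈ Set.Ioo (0 : ℝ) 1) ∧ α 1 < α 0 ∧ α 0 < α 2 ∧ α 2 < α 3 ∧
    ∀ e : Fin 2 → ℝ, (∀ g, 0 < e g) →
      let fam : Fin 4 → Fin 2 := ![0, 0, 1, 1]
      let u : Fin 4 → (Fin 2 → ℝ) → ℝ := fun i => cd (α i)
      let Feasible : (Fin 2 → Fin 2 → ℝ) → Prop := fun x =>
        (∀ f g, 0 ≤ x f g) ∧ ∀ g, ∑ f, x f g ≤ e g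
      let PO : (Fin 2 → Fin 2 → ℝ) → Prop := fun x => ¬ ∃ y, Feasible y ∧
        (∀ i, u i (y (fam i)) ≥ u i (x (fam i))) ∧
        ∃ j, u j (y (fam j)) > u j (x (fam j))
      ¬ ∃ x, Feasible x ∧
        (∃ r : Fin 2 → ℝ, (∀ g, 0 ≤ r g) ∧ ∀ i, u i (x (fam i)) = u i r) ∧
        PO x := by
  refine ⟨![3/8, 1/4, 5/8, 3/4], ?_, by norm_num, by simp; norm_num, by simp; norm_num, ?_⟩
  · intro i; fin_cases i <;> norm_num
  intro e he fam u Feasible PO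
  rintro ⟨x, ⟨hxnn, hxsum⟩, ⟨r, hrnn, hur⟩, hPO⟩
  apply hPO
  have hα : ∀ i : Fin 4, 0 < (![3/8, 1/4, 5/8, 3/4] : Fin 4 → ℝ) i ∧
      (![3/8, 1/4, 5/8, 3/4] : Fin 4 → ℝ) i < 1 := by
    intro i; fin_cases i <;> norm_num
  have h0 := hur 0
  have h1 := hur 1
  have h2 := hur 2
  have h3 := hur 3
  simp only [u, fam, Matrix.cons_val_zero, Matrix.cons_val_one, Matrix.cons_val_two,
    Matrix.cons_val_three, Matrix.head_cons, Matrix.tail_cons] at h0 h1 h2 h3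
  by_cases hb : r 0 = 0 ∨ r 1 = 0
  · -- boundary case: all utilities are 0, split endowment equally
    have hz : ∀ i : Fin 4, u i r = 0 := fun i => cd_zero (hα i).1 (hα i).2 hb
    have hy : ∀ i : Fin 4, 0 < u i (fun g => e g / 2) :=
      fun i => cd_pos (by have := he 0; positivity) (by have := he 1; positivity)
    refine ⟨fun f g => e g / 2, ⟨fun f g => by have := he g; positivity, fun g => by
      rw [Fin.sum_univ_two]; linarith [he g]⟩, ?_, ⟨0, ?_⟩⟩
    · intro i; rw [hur i, hz i]; exact (hy i).le
    · rw [hur 0, hz 0]; exact hy 0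
  · push_neg at hb
    have hr0' : 0 < r 0 := (hrnn 0).lt_of_ne (Ne.symm hb.1)
    have hr1' : 0 < r 1 := (hrnn 1).lt_of_ne (Ne.symm hb.2)
    have urpos : ∀ a : ℝ, 0 < cd a r := fun a => cd_pos hr0' hr1'
    -- positivity of x
    have hxpos : ∀ f g, 0 < x f g := by
      intro f g
      rcases (hxnn f g).lt_or_eq with h | h
      · exact h
      exfalso
      have hor : x f 0 = 0 ∨ x f 1 = 0 := by
        obtain hg | hg : g = 0 ∨ g = 1 := by omega
        · exact Or.inl (hg ▸ h.symm)
        · exact Or.inr (hg ▸ h.symm)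
      obtain hf | hf : f = 0 ∨ f = 1 := by omega
      · subst hf
        have hc := cd_zero (a := 3/8) (by norm_num) (by norm_num) hor
        rw [h0] at hc
        exact absurd hc (ne_of_gt (urpos _))
      · subst hf
        have hc := cd_zero (a := 5/8) (by norm_num) (by norm_num) hor
        rw [h2] at hc
        exact absurd hc (ne_of_gt (urpos _))
    have hxr0 : x 0 0 = r 0 ∧ x 0 1 = r 1 :=
      cd_inj (a := 3/8) (b := 1/4) (by norm_num) (by norm_num) (by norm_num) (by norm_num)
        (by norm_num) (hxpos 0 0) (hxpos 0 1) hr0' hr1' h0 h1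
    have hxr1 : x 1 0 = r 0 ∧ x 1 1 = r 1 :=
      cd_inj (a := 5/8) (b := 3/4) (by norm_num) (by norm_num) (by norm_num) (by norm_num)
        (by norm_num) (hxpos 1 0) (hxpos 1 1) hr0' hr1' h2 h3
    have hsum : ∀ g, r g + r g ≤ e g := by
      intro g
      have hs := hxsum g
      rw [Fin.sum_univ_two] at hs
      obtain hg | hg : g = 0 ∨ g = 1 := by omega
      · subst hg; rw [hxr0.1, hxr1.1] at hs; exact hs
      · subst hg; rw [hxr0.2, hxr1.2] at hs; exact hs
    -- numeric facts
    have k0 : 1 < (9/10:ℝ) ^ ((3:ℝ)/8) * (11/10:ℝ) ^ ((5:ℝ)/8) := by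
      have h := mix (9/10) (11/10) 3 5 (by norm_num) (by norm_num) (by norm_num) (by norm_num)
      push_cast at h; exact h
    have k1 : 1 < (9/10:ℝ) ^ ((1:ℝ)/4) * (11/10:ℝ) ^ ((3:ℝ)/4) := by
      have h := mix (9/10) (11/10) 2 6 (by norm_num) (by norm_num) (by norm_num) (by norm_num)
      push_cast at h; norm_num at h ⊢; convert h using 3 <;> norm_num
    have k2 : 1 < (11/10:ℝ) ^ ((5:ℝ)/8) * (9/10:ℝ) ^ ((3:ℝ)/8) := by
      have h := mix (11/10) (9/10) 5 3 (by norm_num) (by norm_num) (by norm_num) (by norm_num)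
      push_cast at h; exact h
    have k3 : 1 < (11/10:ℝ) ^ ((3:ℝ)/4) * (9/10:ℝ) ^ ((1:ℝ)/4) := by
      have h := mix (11/10) (9/10) 6 2 (by norm_num) (by norm_num) (by norm_num) (by norm_num)
      push_cast at h; norm_num at h ⊢; convert h using 3 <;> norm_num
    have hs0 : ∀ a : ℝ, cd a (fun g => (![9/10, 11/10] : Fin 2 → ℝ) g * r g) =
        ((9/10:ℝ) ^ a * (11/10:ℝ) ^ (1 - a)) * cd a r := by
      intro a
      rw [cd_scale _ _ _ (by norm_num) (by norm_num) hr0'.le hr1'.le]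
      norm_num
    have hs1 : ∀ a : ℝ, cd a (fun g => (![11/10, 9/10] : Fin 2 → ℝ) g * r g) =
        ((11/10:ℝ) ^ a * (9/10:ℝ) ^ (1 - a)) * cd a r := by
      intro a
      rw [cd_scale _ _ _ (by norm_num) (by norm_num) hr0'.le hr1'.le]
      norm_num
    refine ⟨![fun g => (![9/10, 11/10] : Fin 2 → ℝ) g * r g,
              fun g => (![11/10, 9/10] : Fin 2 → ℝ) g * r g], ⟨?_, ?_⟩, ?_, ⟨0, ?_⟩⟩
    · intro f g
      have hf : f = 0 ∨ f = 1 := by omega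
      have hg : g = 0 ∨ g = 1 := by omega
      rcases hf with hf | hf <;> rcases hg with hg | hg <;> subst hf <;> subst hg <;>
        simp only [Matrix.cons_val_zero, Matrix.cons_val_one, Matrix.head_cons] <;>
        nlinarith [hr0', hr1']
    · intro g
      rw [Fin.sum_univ_two]
      obtain hg | hg : g = 0 ∨ g = 1 := by omega
      · subst hg; simp only [Matrix.cons_val_zero, Matrix.cons_val_one, Matrix.head_cons]
        nlinarith [hsum 0, hr0']
      · subst hg; simp only [Matrix.cons_val_zero, Matrix.cons_val_one, Matrix.head_cons]
        nlinarith [hsum 1, hr1']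
    · intro i
      rw [hur i]
      have hi : i = 0 ∨ i = 1 ∨ i = 2 ∨ i = 3 := by omega
      rcases hi with hi | hi | hi | hi <;> subst hi <;>
        simp only [u, fam, Matrix.cons_val_zero, Matrix.cons_val_one, Matrix.cons_val_two,
          Matrix.cons_val_three, Matrix.head_cons, Matrix.tail_cons, ge_iff_le]
      · rw [hs0 (3/8), show (1:ℝ) - 3/8 = 5/8 by norm_num]
        exact ((lt_mul_iff_one_lt_left (urpos _)).mpr k0).le
      · rw [hs0 (1/4), show (1:ℝ) - 1/4 = 3/4 by norm_num]
        exact ((lt_mul_iff_one_lt_left (urpos _)).mpr k1).le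
      · rw [hs1 (5/8), show (1:ℝ) - 5/8 = 3/8 by norm_num]
        exact ((lt_mul_iff_one_lt_left (urpos _)).mpr k2).le
      · rw [hs1 (3/4), show (1:ℝ) - 3/4 = 1/4 by norm_num]
        exact ((lt_mul_iff_one_lt_left (urpos _)).mpr k3).le
    · rw [hur 0]
      simp only [u, fam, Matrix.cons_val_zero, gt_iff_lt]
      rw [hs0 (3/8), show (1:ℝ) - 3/8 = 5/8 by norm_num]
      exact (lt_mul_iff_one_lt_left (urpos _)).mpr k0
end

section
/- If u, u' are two strictly monotonic utility functions on ℝ₊² satisfying the single-crossing property, then for any bundles x, r: u(x) = u(r) and u'(x) = u'(r) together imply x = r. -/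
section Indifference

variable {u v : ℝ × ℝ → ℝ}

theorem eq_of_le_of_apply_eq
    (hu : ∀ a b : ℝ × ℝ, 0 ≤ a.1 → 0 ≤ a.2 → a.1 ≤ b.1 → a.2 ≤ b.2 → a ≠ b → u a < u b)
    {a b : ℝ × ℝ} (ha1 : 0 ≤ a.1) (ha2 : 0 ≤ a.2) (h1 : a.1 ≤ b.1) (h2 : a.2 ≤ b.2)
    (h : u a = u b) : a = b :=
  by_contra fun hne => (hu a b ha1 ha2 h1 h2 hne).ne h

theorem eq_of_fst_le_of_apply_eq_of_apply_eq
    (hu : ∀ a b : ℝ × ℝ, 0 ≤ a.1 → 0 ≤ a.2 → a.1 ≤ b.1 → a.2 ≤ b.2 → a ≠ b → u a < u b)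
    (hsc : ∀ a b : ℝ × ℝ, 0 ≤ a.1 → 0 ≤ a.2 → 0 ≤ b.1 → 0 ≤ b.2 →
      a.1 < b.1 → b.2 < a.2 → u b ≥ u a → v b > v a)
    {x r : ℝ × ℝ} (hx1 : 0 ≤ x.1) (hx2 : 0 ≤ x.2) (hr1 : 0 ≤ r.1) (hr2 : 0 ≤ r.2)
    (hfst : x.1 ≤ r.1) (hu_eq : u x = u r) (hv_eq : v x = v r) : x = r := by
  rcases le_or_gt x.2 r.2 with hsnd | hsnd
  · exact eq_of_le_of_apply_eq hu hx1 hx2 hfst hsnd hu_eq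
  rcases hfst.eq_or_lt with hfst | hfst
  · exact (eq_of_le_of_apply_eq hu hr1 hr2 hfst.ge hsnd.le hu_eq.symm).symm
  · exact absurd hv_eq (hsc x r hx1 hx2 hr1 hr2 hfst hsnd hu_eq.le).ne

end Indifference

theorem stmt_16_general (u v : ℝ × ℝ → ℝ)
    (humono : ∀ a b : ℝ × ℝ, 0 ≤ a.1 → 0 ≤ a.2 →
      a.1 ≤ b.1 → a.2 ≤ b.2 → a ≠ b → u a < u b)
    (hsc1 : ∀ a b : ℝ × ℝ, 0 ≤ a.1 → 0 ≤ a.2 → 0 ≤ b.1 → 0 ≤ b.2 →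
      a.1 < b.1 → b.2 < a.2 → u b ≥ u a → v b > v a)
    (x r : ℝ × ℝ) (hx1 : 0 ≤ x.1) (hx2 : 0 ≤ x.2) (hr1 : 0 ≤ r.1) (hr2 : 0 ≤ r.2)
    (h1 : u x = u r) (h2 : v x = v r) : x = r := by
  rcases le_total x.1 r.1 with h | h
  · exact eq_of_fst_le_of_apply_eq_of_apply_eq humono hsc1 hx1 hx2 hr1 hr2 h h1 h2
  · exact (eq_of_fst_le_of_apply_eq_of_apply_eq humono hsc1 hr1 hr2 hx1 hx2 h
      h1.symm h2.symm).symm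

/-- If two strictly monotonic utilities on the nonnegative quadrant satisfy the
single-crossing property, then a common indifference `u x = u r`, `v x = v r`
forces `x = r`. -/
theorem stmt_16 (u v : ℝ × ℝ → ℝ)
    (humono : ∀ a b : ℝ × ℝ, 0 ≤ a.1 → 0 ≤ a.2 →
      a.1 ≤ b.1 → a.2 ≤ b.2 → a ≠ b → u a < u b)
    (hvmono : ∀ a b : ℝ × ℝ, 0 ≤ a.1 → 0 ≤ a.2 →
      a.1 ≤ b.1 → a.2 ≤ b.2 → a ≠ b → v a < v b)
    (hsc1 : ∀ a b : ℝ × ℝ, 0 ≤ a.1 → 0 ≤ a.2 → 0 ≤ b.1 → 0 ≤ b.2 →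
      a.1 < b.1 → b.2 < a.2 → u b ≥ u a → v b > v a)
    (hsc2 : ∀ a b : ℝ × ℝ, 0 ≤ a.1 → 0 ≤ a.2 → 0 ≤ b.1 → 0 ≤ b.2 →
      b.1 < a.1 → a.2 < b.2 → v b ≥ v a → u b > u a)
    (x r : ℝ × ℝ) (hx1 : 0 ≤ x.1) (hx2 : 0 ≤ x.2) (hr1 : 0 ≤ r.1) (hr2 : 0 ≤ r.2)
    (h1 : u x = u r) (h2 : v x = v r) : x = r :=
  stmt_16_general u v humono hsc1 x r hx1 hx2 hr1 hr2 h1 h2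
end

section
/- Consider the economy with two goods (3/2 units each), five agents in families {h,w}, {h',w'}, {s}, where u_h(y,z) = u_{h'}(y,z) = u_s(y,z) = y + z, u_w(y,z) = y^{1/4}z^{3/4}, u_{w'}(y,z) = y^{3/4}z^{1/4}. Then no allocation is simultaneously Pareto-optimal, individual-fair-share, and family-egalitarian-equivalent. In particular: individual-FS forces y_f + z_f = y_{f'} + z_{f'} = y_s + z_s = 1 for any Pareto-optimal individual-FS allocation, the unique such Pareto optimum gives f the bundle (1/4, 3/4) and f' the bundle (3/4, 1/4), and no reference bundle r with y_r + z_r = 1 makes both wives indifferent-or-conflicted with their family's bundle. -/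
section CobbDouglas

variable {a : ℝ} {x b : Fin 2 → ℝ}

theorem cd_lt_cd_of_add_eq_one (ha₀ : 0 < a) (ha₁ : a < 1) (hx₀ : 0 ≤ x 0) (hx₁ : 0 ≤ x 1)
    (hx : x 0 + x 1 = 1) (hb : b 0 + b 1 = 1) (hb₀ : b 0 = a) (hne : x 0 ≠ a) :
    cd a x < cd a b := by
  have hb₁ : b 1 = 1 - a := by linarith
  have ha' : 0 < 1 - a := sub_pos.2 ha₁
  have hratio : x 0 / a ≠ x 1 / (1 - a) := by
    rw [Ne, div_eq_div_iff ha₀.ne' ha'.ne']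
    intro h
    exact hne (by linear_combination h + a * hx)
  have amgm := (Real.geom_mean_lt_arith_mean2_weighted_iff_of_pos ha₀ ha'
    (div_nonneg hx₀ ha₀.le) (div_nonneg hx₁ ha'.le) (by ring)).2 hratio
  have hmean : a * (x 0 / a) + (1 - a) * (x 1 / (1 - a)) = 1 := by
    field_simp
    linarith
  rw [hmean, Real.div_rpow hx₀ ha₀.le, Real.div_rpow hx₁ ha'.le, div_mul_div_comm,
    div_lt_one (by positivity)] at amgm
  simpa [cd, hb₀, hb₁] using amgm

theorem cd_le_cd_of_add_eq_one (ha₀ : 0 < a) (ha₁ : a < 1) (hx₀ : 0 ≤ x 0) (hx₁ : 0 ≤ x 1)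
    (hx : x 0 + x 1 = 1) (hb : b 0 + b 1 = 1) (hb₀ : b 0 = a) : cd a x ≤ cd a b := by
  by_cases h : x 0 = a
  · unfold cd
    rw [h, ← hb₀, show x 1 = b 1 by linarith]
  · exact (cd_lt_cd_of_add_eq_one ha₀ ha₁ hx₀ hx₁ hx hb hb₀ h).le

theorem fst_eq_of_cd_eq_cd_of_add_eq_one (ha₀ : 0 < a) (ha₁ : a < 1) (hx₀ : 0 ≤ x 0)
    (hx₁ : 0 ≤ x 1) (hx : x 0 + x 1 = 1) (hb : b 0 + b 1 = 1) (hb₀ : b 0 = a)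
    (h : cd a b = cd a x) : x 0 = a :=
  by_contra fun hne => (cd_lt_cd_of_add_eq_one ha₀ ha₁ hx₀ hx₁ hx hb hb₀ hne).ne' h

end CobbDouglas

section EgalitarianEquivalence

variable {ι κ β : Type*}

/-- Egalitarian-equivalence condition for family `f` consuming `b`, relative to the reference
bundle `r`. -/
def EECond (u : ι → β → ℝ) (fam : ι → κ) (f : κ) (b r : β) : Prop :=
  (∀ i, fam i = f → u i b = u i r) ∨
    ∃ i j, fam i = f ∧ fam j = f ∧ u i b > u i r ∧ u j b < u j r

theorem EECond.eq_of_forall_ne {u : ι → β → ℝ} {fam : ι → κ} {f : κ} {b r : β} {k : ι}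
    (h : EECond u fam f b r) (hk : fam k = f)
    (hothers : ∀ i, fam i = f → i ≠ k → u i b = u i r) : u k b = u k r := by
  rcases h with hall | ⟨i, j, hi, hj, hgt, hlt⟩
  · exact hall k hk
  · obtain rfl : i = k := by_contra fun hne => hgt.ne' (hothers i hi hne)
    obtain rfl : j = i := by_contra fun hne => hlt.ne (hothers j hj hne)
    exact absurd hgt hlt.not_gt

end EgalitarianEquivalence

namespace TwoCouplesAndSingle

-- Agents `0, …, 4` are `h, w, h', w', s`; families `0, 1, 2` are `{h, w}`, `{h', w'}`, `{s}`.
noncomputable def utility : Fin 5 → (Fin 2 → ℝ) → ℝ :=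
  ![fun b => b 0 + b 1, cd (1/4), fun b => b 0 + b 1, cd (3/4), fun b => b 0 + b 1]

def family : Fin 5 → Fin 3 := ![0, 0, 1, 1, 2]

def Feasible (x : Fin 3 → Fin 2 → ℝ) : Prop :=
  (∀ f g, 0 ≤ x f g) ∧ ∀ g, ∑ f, x f g ≤ ![3/2, 3/2] g

def FairShare (x : Fin 3 → Fin 2 → ℝ) : Prop :=
  ∀ i, utility i (x (family i)) ≥ utility i ![1/2, 1/2]

def ParetoOptimal (x : Fin 3 → Fin 2 → ℝ) : Prop :=
  ¬ ∃ y, Feasible y ∧ (∀ i, utility i (y (family i)) ≥ utility i (x (family i))) ∧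
    ∃ j, utility j (y (family j)) > utility j (x (family j))

def FamilyEE (x : Fin 3 → Fin 2 → ℝ) : Prop :=
  ∃ r : Fin 2 → ℝ, (∀ g, 0 ≤ r g) ∧ ∀ f, EECond utility family f (x f) r

theorem bundle_sum_eq_one {x : Fin 3 → Fin 2 → ℝ} (hF : Feasible x) (hFS : FairShare x) :
    ∀ f, x f 0 + x f 1 = 1 := by
  have h₀ := hFS 0
  have h₁ := hFS 2
  have h₂ := hFS 4
  have hy := hF.2 0
  have hz := hF.2 1
  simp only [utility, family, Matrix.cons_val, Matrix.cons_val_zero, Matrix.cons_val_one,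
    Matrix.cons_val_fin_one, Fin.sum_univ_three] at h₀ h₁ h₂ hy hz
  intro f
  fin_cases f <;> dsimp only [Fin.zero_eta, Fin.mk_one, Fin.reduceFinMk] <;> linarith

noncomputable def optimum : Fin 3 → Fin 2 → ℝ := ![![1/4, 3/4], ![3/4, 1/4], ![1/2, 1/2]]

theorem feasible_optimum : Feasible optimum := by
  constructor
  · intro f g
    fin_cases f <;> fin_cases g <;> norm_num [optimum]
  · intro g
    fin_cases g <;> norm_num [optimum, Fin.sum_univ_three, Matrix.cons_val_two]

theorem utility_le_optimum {x : Fin 3 → Fin 2 → ℝ} (hF : Feasible x) (hFS : FairShare x) :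
    ∀ i, utility i (x (family i)) ≤ utility i (optimum (family i)) := by
  have hsum := bundle_sum_eq_one hF hFS
  intro i
  fin_cases i
  · show x 0 0 + x 0 1 ≤ 1/4 + 3/4
    linarith [hsum 0]
  · show cd (1/4) (x 0) ≤ cd (1/4) ![1/4, 3/4]
    exact cd_le_cd_of_add_eq_one (by norm_num) (by norm_num) (hF.1 0 0) (hF.1 0 1) (hsum 0)
      (by norm_num) (by norm_num)
  · show x 1 0 + x 1 1 ≤ 3/4 + 1/4
    linarith [hsum 1]
  · show cd (3/4) (x 1) ≤ cd (3/4) ![3/4, 1/4]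
    exact cd_le_cd_of_add_eq_one (by norm_num) (by norm_num) (hF.1 1 0) (hF.1 1 1) (hsum 1)
      (by norm_num) (by norm_num)
  · show x 2 0 + x 2 1 ≤ 1/2 + 1/2
    linarith [hsum 2]

theorem eq_of_paretoOptimal {x : Fin 3 → Fin 2 → ℝ} (hF : Feasible x) (hFS : FairShare x)
    (hPO : ParetoOptimal x) : x 0 = ![1/4, 3/4] ∧ x 1 = ![3/4, 1/4] := by
  have hsum := bundle_sum_eq_one hF hFS
  have hwives : x 0 0 = 1/4 ∧ x 1 0 = 3/4 := by
    by_contra hne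
    refine hPO ⟨optimum, feasible_optimum, utility_le_optimum hF hFS, ?_⟩
    rcases not_and_or.mp hne with h | h
    · exact ⟨1, cd_lt_cd_of_add_eq_one (b := ![1/4, 3/4]) (by norm_num) (by norm_num)
        (hF.1 0 0) (hF.1 0 1) (hsum 0) (by norm_num) (by norm_num) h⟩
    · exact ⟨3, cd_lt_cd_of_add_eq_one (b := ![3/4, 1/4]) (by norm_num) (by norm_num)
        (hF.1 1 0) (hF.1 1 1) (hsum 1) (by norm_num) (by norm_num) h⟩
  have hx₀₁ : x 0 1 = 3/4 := by linarith [hsum 0]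
  have hx₁₁ : x 1 1 = 1/4 := by linarith [hsum 1]
  exact ⟨funext (Fin.forall_fin_two.2 ⟨hwives.1, hx₀₁⟩),
    funext (Fin.forall_fin_two.2 ⟨hwives.2, hx₁₁⟩)⟩

theorem ref_sum_eq_of_eeCond_single {b r : Fin 2 → ℝ} (h : EECond utility family 2 b r) :
    b 0 + b 1 = r 0 + r 1 :=
  h.eq_of_forall_ne (k := 4) rfl fun i hi hne => by
    fin_cases i <;> simp [family] at hi hne

theorem ref_fst_eq_of_eeCond_first_couple {r : Fin 2 → ℝ} (hr : ∀ g, 0 ≤ r g)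
    (hr₁ : r 0 + r 1 = 1) (h : EECond utility family 0 ![1/4, 3/4] r) : r 0 = 1/4 := by
  have hhusband : utility 0 ![1/4, 3/4] = utility 0 r := by
    show (1/4:ℝ) + 3/4 = r 0 + r 1
    linarith
  have hwife : utility 1 ![1/4, 3/4] = utility 1 r :=
    h.eq_of_forall_ne rfl fun i hi hne => by
      fin_cases i <;> first | exact hhusband | simp [family] at hi hne
  exact fst_eq_of_cd_eq_cd_of_add_eq_one (by norm_num) (by norm_num) (hr 0) (hr 1) hr₁
    (by norm_num) (by norm_num) hwife

theorem ref_fst_eq_of_eeCond_second_couple {r : Fin 2 → ℝ} (hr : ∀ g, 0 ≤ r g)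
    (hr₁ : r 0 + r 1 = 1) (h : EECond utility family 1 ![3/4, 1/4] r) : r 0 = 3/4 := by
  have hhusband : utility 2 ![3/4, 1/4] = utility 2 r := by
    show (3/4:ℝ) + 1/4 = r 0 + r 1
    linarith
  have hwife : utility 3 ![3/4, 1/4] = utility 3 r :=
    h.eq_of_forall_ne rfl fun i hi hne => by
      fin_cases i <;> first | exact hhusband | simp [family] at hi hne
  exact fst_eq_of_cd_eq_cd_of_add_eq_one (by norm_num) (by norm_num) (hr 0) (hr 1) hr₁
    (by norm_num) (by norm_num) hwife

theorem not_eeCond_both_couples {r : Fin 2 → ℝ} (hr : ∀ g, 0 ≤ r g) (hr₁ : r 0 + r 1 = 1) :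
    ¬ (EECond utility family 0 ![1/4, 3/4] r ∧ EECond utility family 1 ![3/4, 1/4] r) := by
  rintro ⟨h₀, h₁⟩
  have := ref_fst_eq_of_eeCond_first_couple hr hr₁ h₀
  have := ref_fst_eq_of_eeCond_second_couple hr hr₁ h₁
  linarith

theorem not_exists_paretoOptimal_fairShare_familyEE :
    ¬ ∃ x, Feasible x ∧ FairShare x ∧ ParetoOptimal x ∧ FamilyEE x := by
  rintro ⟨x, hF, hFS, hPO, r, hr, hEE⟩
  obtain ⟨hx₀, hx₁⟩ := eq_of_paretoOptimal hF hFS hPO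
  have hr₁ : r 0 + r 1 = 1 := by
    rw [← ref_sum_eq_of_eeCond_single (hEE 2), bundle_sum_eq_one hF hFS 2]
  exact not_eeCond_both_couples hr hr₁ ⟨hx₀ ▸ hEE 0, hx₁ ▸ hEE 1⟩

end TwoCouplesAndSingle

/-- The economy with e = (3/2, 3/2), agents 0=h, 1=w, 2=h', 3=w', 4=s in families
{h,w}, {h',w'}, {s}, where h, h', s have linear utility y + z and the wives have
Cobb-Douglas utilities with coefficients 1/4 and 3/4, has no allocation that is
simultaneously Pareto-optimal, individual-fair-share, and family-egalitarian-
equivalent; moreover every individual-FS Pareto optimum gives every family a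
bundle summing to 1, with family bundles (1/4, 3/4) and (3/4, 1/4), and no
reference bundle on the line y + z = 1 works for both wives. -/
theorem stmt_17 :
    let e : Fin 2 → ℝ := ![3/2, 3/2]
    let ebar : Fin 2 → ℝ := ![1/2, 1/2]
    let u : Fin 5 → (Fin 2 → ℝ) → ℝ :=
      ![fun b => b 0 + b 1, cd (1/4), fun b => b 0 + b 1, cd (3/4), fun b => b 0 + b 1]
    let fam : Fin 5 → Fin 3 := ![0, 0, 1, 1, 2]
    let Feasible : (Fin 3 → Fin 2 → ℝ) → Prop := fun x =>
      (∀ f g, 0 ≤ x f g) ∧ ∀ g, ∑ f, x f g ≤ e g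
    let FS : (Fin 3 → Fin 2 → ℝ) → Prop := fun x => ∀ i, u i (x (fam i)) ≥ u i ebar
    let PO : (Fin 3 → Fin 2 → ℝ) → Prop := fun x => ¬ ∃ y, Feasible y ∧
      (∀ i, u i (y (fam i)) ≥ u i (x (fam i))) ∧
      ∃ j, u j (y (fam j)) > u j (x (fam j))
    let EEcond : Fin 3 → (Fin 2 → ℝ) → (Fin 2 → ℝ) → Prop := fun f b r =>
      (∀ i, fam i = f → u i b = u i r) ∨
      (∃ i j, fam i = f ∧ fam j = f ∧ u i b > u i r ∧ u j b < u j r)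
    let FamEE : (Fin 3 → Fin 2 → ℝ) → Prop := fun x =>
      ∃ r : Fin 2 → ℝ, (∀ g, 0 ≤ r g) ∧ ∀ f, EEcond f (x f) r
    (¬ ∃ x, Feasible x ∧ FS x ∧ PO x ∧ FamEE x) ∧
    (∀ x, Feasible x → FS x → PO x → ∀ f, x f 0 + x f 1 = 1) ∧
    (∀ x, Feasible x → FS x → PO x → x 0 = ![1/4, 3/4] ∧ x 1 = ![3/4, 1/4]) ∧
    (∀ r : Fin 2 → ℝ, (∀ g, 0 ≤ r g) → r 0 + r 1 = 1 →
      ¬ (EEcond 0 ![1/4, 3/4] r ∧ EEcond 1 ![3/4, 1/4] r)) := by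
  intro e ebar u fam Feasible FS PO EEcond FamEE
  exact ⟨TwoCouplesAndSingle.not_exists_paretoOptimal_fairShare_familyEE,
    fun _ hF hFS _ => TwoCouplesAndSingle.bundle_sum_eq_one hF hFS,
    fun _ hF hFS hPO => TwoCouplesAndSingle.eq_of_paretoOptimal hF hFS hPO,
    fun _ hr hr₁ => TwoCouplesAndSingle.not_eeCond_both_couples hr hr₁⟩
end
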